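/- arXiv:math/0606014 — 5 statements merged into one kernel-verified Lean document; each statement's English description precedes it below -/
import Mathlib

section
/- For every integer m ≥ 1, the upper Minkowski dimension of the metric space (𝒢(ℤ^m), d_𝒢) of normal subgroups of ℤ^m (equivalently, of the subspace of abelian marked groups on m generators) is zero. -/
open Filter Set
open scoped ENNReal NNReal

namespace MarkedSpace

noncomputable section

variable {E : Type*}

/-- `coverNum d s ε` : the minimal cardinality of a cover of the (sub)space `s`
by closed balls of radius `ε` (centered in `s`), for the distance function `d`. -/
def coverNum (d : E → E → ℝ) (s : Set E) (ε : ℝ) : ℕ :=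
  sInf {n : ℕ | ∃ t : Finset E, t.card = n ∧ ↑t ⊆ s ∧ s ⊆ ⋃ x ∈ t, {y | d x y ≤ ε}}

/-- `packNum d s ε` : the maximal number of pairwise disjoint closed balls
of radius `ε` in the (sub)space `s`. -/
def packNum (d : E → E → ℝ) (s : Set E) (ε : ℝ) : ℕ :=
  sSup {n : ℕ | ∃ t : Finset E, t.card = n ∧ ↑t ⊆ s ∧
    (↑t : Set E).Pairwise fun x y =>
      Disjoint {z | z ∈ s ∧ d x z ≤ ε} {z | z ∈ s ∧ d y z ≤ ε}}

/-- Lower Minkowski dimension of the (sub)space `s`: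
`liminf_{ε → 0⁺} log N(s,ε) / log (1/ε)`. -/
def mdimLower (d : E → E → ℝ) (s : Set E) : ℝ≥0∞ :=
  liminf (fun ε : ℝ => ENNReal.ofReal (Real.log (coverNum d s ε : ℝ) / Real.log (1 / ε)))
    (nhdsWithin 0 (Set.Ioi 0))

/-- Upper Minkowski dimension of the (sub)space `s`:
`limsup_{ε → 0⁺} log N(s,ε) / log (1/ε)`. -/
def mdimUpper (d : E → E → ℝ) (s : Set E) : ℝ≥0∞ :=
  limsup (fun ε : ℝ => ENNReal.ofReal (Real.log (coverNum d s ε : ℝ) / Real.log (1 / ε)))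
    (nhdsWithin 0 (Set.Ioi 0))

/-- The valuation `ν(A,B) = sup {n | A ∩ B(n) = B ∩ B(n)}` associated to a
family of balls `ball : ℕ → Set E`. -/
def nuB (ball : ℕ → Set E) (A B : Set E) : ℕ∞ :=
  ⨆ (n : ℕ) (_ : A ∩ ball n = B ∩ ball n), (n : ℕ∞)

/-- The ultrametric distance `d(A,B) = 2^{-ν(A,B)}` (with `2^{-∞} = 0`, and with the
convention that the distance is `2` when `A` and `B` do not even agree on the ball of
radius `0`). -/
def distB (ball : ℕ → Set E) (A B : Set E) : ℝ :=
  haveI : Decidable (A ∩ ball 0 = B ∩ ball 0) := Classical.propDecidable _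
  if A ∩ ball 0 = B ∩ ball 0 then
    (if nuB ball A B = ⊤ then 0 else (2⁻¹ : ℝ) ^ (nuB ball A B).toNat)
  else 2

end

end MarkedSpace

namespace MarkedSpace

/-- The ball of radius `n` in `ℤ^m` with respect to the canonical generating family,
i.e. the `ℓ¹`-ball. -/
def zmball (m : ℕ) (n : ℕ) : Set (Fin m → ℤ) := {v | (∑ i, |v i|) ≤ (n : ℤ)}

end MarkedSpace

open MarkedSpace
open scoped Topology

/-- ℓ¹ norm on `Fin m → ℤ`, valued in ℕ. -/
def norm1 {m : ℕ} (v : Fin m → ℤ) : ℕ := ∑ i, (v i).natAbs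

section norm1
variable {m : ℕ} (v w : Fin m → ℤ)

lemma norm1_zero : norm1 (0 : Fin m → ℤ) = 0 := by simp [norm1]

lemma coord_le_norm1 (i : Fin m) : (v i).natAbs ≤ norm1 v :=
  Finset.single_le_sum (f := fun i => (v i).natAbs) (fun _ _ => Nat.zero_le _) (Finset.mem_univ i)

lemma norm1_add : norm1 (v + w) ≤ norm1 v + norm1 w := by
  rw [norm1, norm1, norm1, ← Finset.sum_add_distrib]
  exact Finset.sum_le_sum fun i _ => Int.natAbs_add_le _ _

lemma norm1_smul (c : ℤ) : norm1 (c • v) = c.natAbs * norm1 v := by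
  simp [norm1, Int.natAbs_mul, Finset.mul_sum]

lemma norm1_neg : norm1 (-v) = norm1 v := by simp [norm1]

lemma norm1_sub_smul (c : ℤ) : norm1 (v - c • w) ≤ norm1 v + c.natAbs * norm1 w := by
  calc norm1 (v - c • w) = norm1 (v + (-c) • w) := by rw [neg_smul, ← sub_eq_add_neg]
  _ ≤ norm1 v + norm1 ((-c) • w) := norm1_add _ _
  _ = norm1 v + c.natAbs * norm1 w := by rw [norm1_smul]; simp

lemma norm1_smul_add_smul (x y : ℤ) : norm1 (x • v + y • w) ≤ x.natAbs * norm1 v + y.natAbs * norm1 w := by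
  calc norm1 (x • v + y • w) ≤ norm1 (x • v) + norm1 (y • w) := norm1_add _ _
  _ = _ := by rw [norm1_smul, norm1_smul]

end norm1

/-- Bezout with crude coefficient bounds. -/
lemma bezout_small (a b : ℤ) (hb : b ≠ 0) :
    ∃ x y : ℤ, x * a + y * b = Int.gcd a b ∧ |x| ≤ |b| ∧ |y| ≤ |a| + 1 := by
  set g : ℤ := (Int.gcd a b : ℤ) with hgdef
  have hgpos : 0 < g := by
    have h := Int.gcd_pos_of_ne_zero_right a hb
    rw [hgdef]; exact_mod_cast h
  set a' : ℤ := a / g with ha'def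
  set b' : ℤ := b / g with hb'def
  have ha : g * a' = a := Int.mul_ediv_cancel' (Int.gcd_dvd_left a b)
  have hbb : g * b' = b := Int.mul_ediv_cancel' (Int.gcd_dvd_right a b)
  have hb'ne : b' ≠ 0 := by
    intro h; apply hb; rw [← hbb, h, mul_zero]
  have hcop : Int.gcd a' b' = 1 := Int.gcd_div_gcd_div_gcd (Int.gcd_pos_of_ne_zero_right a hb)
  have hbez : (1 : ℤ) = a' * Int.gcdA a' b' + b' * Int.gcdB a' b' := by
    have := Int.gcd_eq_gcd_ab a' b'
    rw [hcop] at this; exact_mod_cast this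
  set b'' : ℤ := |b'| with hb''def
  have hb''pos : 0 < b'' := abs_pos.2 hb'ne
  set x : ℤ := Int.gcdA a' b' % b'' with hxdef
  have hxnonneg : 0 ≤ x := Int.emod_nonneg _ (ne_of_gt hb''pos)
  have hxlt : x < b'' := Int.emod_lt_of_pos _ hb''pos
  have hdvd : b' ∣ 1 - x * a' := by
    have h1 : b'' ∣ Int.gcdA a' b' - x := Int.dvd_self_sub_of_emod_eq rfl
    have h2 : b' ∣ Int.gcdA a' b' - x := (abs_dvd b' _).mp h1
    obtain ⟨k, hk⟩ := h2
    refine ⟨Int.gcdB a' b' + k * a', ?_⟩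
    have : x = Int.gcdA a' b' - b' * k := by rw [← hk]; ring
    rw [this, hbez]; ring
  set y : ℤ := (1 - x * a') / b' with hydef
  have hyb : y * b' = 1 - x * a' := Int.ediv_mul_cancel hdvd
  have heq : x * a' + y * b' = 1 := by rw [hyb]; ring
  refine ⟨x, y, ?_, ?_, ?_⟩
  · -- x * a + y * b = g
    have : x * a + y * b = (x * a' + y * b') * g := by rw [← ha, ← hbb]; ring
    rw [this, heq, one_mul]
  · -- |x| ≤ |b|
    have h1 : |x| ≤ |b'| := by
      rw [abs_of_nonneg hxnonneg]; exact le_of_lt hxlt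
    refine h1.trans ?_
    have : |b| = |g| * |b'| := by rw [← hbb, abs_mul]
    rw [this]
    have hg1 : 1 ≤ |g| := by rw [abs_of_pos hgpos]; exact hgpos
    nlinarith [abs_nonneg b']
  · -- |y| ≤ |a| + 1
    have hb'1 : 1 ≤ |b'| := by
      rcases abs_pos.2 hb'ne with h; omega
    have h1 : |y| * |b'| ≤ 1 + |b'| * |a'| := by
      rw [← abs_mul, hyb]
      calc |1 - x * a'| ≤ |(1:ℤ)| + |x * a'| := abs_sub _ _
      _ = 1 + |x| * |a'| := by rw [abs_mul, abs_one]
      _ ≤ 1 + |b'| * |a'| := by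
          have : |x| ≤ |b'| := by rw [abs_of_nonneg hxnonneg]; exact le_of_lt hxlt
          nlinarith [abs_nonneg a']
    have h2 : |y| * |b'| ≤ (1 + |a'|) * |b'| := by nlinarith [abs_nonneg a']
    have h3 : |y| ≤ 1 + |a'| := le_of_mul_le_mul_right h2 (lt_of_lt_of_le one_pos hb'1)
    have h4 : |a'| ≤ |a| := by
      rw [← ha, abs_mul]
      have hg1 : 1 ≤ |g| := by rw [abs_of_pos hgpos]; exact hgpos
      nlinarith [abs_nonneg a']
    omega

section spanlemmas
variable {m : ℕ}

lemma coord_dvd_of_mem_span (S : Set (Fin m → ℤ)) (c : Fin m) (D : ℤ)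
    (hD : ∀ s ∈ S, D ∣ s c) {w : Fin m → ℤ} (hw : w ∈ Submodule.span ℤ S) :
    D ∣ w c := by
  induction hw using Submodule.span_induction with
  | mem s hs => exact hD s hs
  | zero => simp
  | add u v _ _ hu hv => exact (Pi.add_apply u v c) ▸ dvd_add hu hv
  | smul a u _ hu => exact (Pi.smul_apply a u c) ▸ Dvd.dvd.mul_left hu a

lemma coord_zero_of_mem_span (S : Set (Fin m → ℤ)) (c : Fin m)
    (hS : ∀ s ∈ S, s c = 0) {w : Fin m → ℤ} (hw : w ∈ Submodule.span ℤ S) :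
    w c = 0 := by
  have := coord_dvd_of_mem_span S c 0 (fun s hs => by rw [hS s hs]) hw
  exact zero_dvd_iff.mp this

end spanlemmas

section descent
variable {m : ℕ}

lemma coord_le_norm1' (v : Fin m → ℤ) (i : Fin m) : (v i).natAbs ≤ norm1 v :=
  Finset.single_le_sum (f := fun i => (v i).natAbs) (fun _ _ => Nat.zero_le _) (Finset.mem_univ i)

lemma norm1_smul_add_smul' (v w : Fin m → ℤ) (x y : ℤ) :
    norm1 (x • v + y • w) ≤ x.natAbs * norm1 v + y.natAbs * norm1 w := by
  calc norm1 (x • v + y • w) ≤ norm1 (x • v) + norm1 (y • w) := by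
        rw [norm1, norm1, norm1, ← Finset.sum_add_distrib]
        exact Finset.sum_le_sum fun i _ => Int.natAbs_add_le _ _
  _ = _ := by simp [norm1, Int.natAbs_mul, Finset.mul_sum]

lemma descent (S : Finset (Fin m → ℤ)) (c : Fin m) (N : ℕ)
    (hS : ∀ s ∈ S, norm1 s ≤ N) :
    ∀ g : ℕ, ∀ M : ℕ, ∀ w : Fin m → ℤ,
      w ∈ Submodule.span ℤ (S : Set (Fin m → ℤ)) → w c = (g : ℤ) → 0 < g → norm1 w ≤ M →
      ∃ w', w' ∈ Submodule.span ℤ (S : Set (Fin m → ℤ)) ∧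
        w' c = ((S.gcd (fun s => (s c).natAbs) : ℕ) : ℤ) ∧
        norm1 w' ≤ M * (3 * N + 3) ^ (Nat.log 2 g + 1) := by
  intro g
  induction g using Nat.strong_induction_on with
  | _ g IH =>
  intro M w hw hwc hg hM
  by_cases hall : ∀ s ∈ S, (g : ℤ) ∣ s c
  · -- terminal case : w c = gcd
    set D := S.gcd (fun s => (s c).natAbs) with hD
    have hgD : g ∣ D := by
      apply Finset.dvd_gcd
      intro s hs
      have := hall s hs
      rwa [Int.natCast_dvd] at this
    have hDg : D ∣ g := by
      have hdvd : (D : ℤ) ∣ w c := by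
        apply coord_dvd_of_mem_span (S : Set (Fin m → ℤ)) c _ _ hw
        intro s hs
        have h1 : D ∣ (s c).natAbs := Finset.gcd_dvd hs
        have h2 : (D : ℤ) ∣ ((s c).natAbs : ℤ) := Int.natCast_dvd_natCast.mpr h1
        exact (Int.dvd_natAbs).mp h2
      rw [hwc] at hdvd
      exact_mod_cast hdvd
    have hgeq : g = D := Nat.dvd_antisymm hgD hDg
    refine ⟨w, hw, by rw [hwc, hgeq], ?_⟩
    calc norm1 w ≤ M := hM
    _ ≤ M * (3 * N + 3) ^ (Nat.log 2 g + 1) :=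
        Nat.le_mul_of_pos_right M (by positivity)
  · -- descent step
    push_neg at hall
    obtain ⟨s, hsS, hnd⟩ := hall
    have hsc : s c ≠ 0 := fun h => hnd (h ▸ dvd_zero _)
    obtain ⟨x, y, hxy, hx, hy⟩ := bezout_small (g : ℤ) (s c) hsc
    set g' : ℕ := Int.gcd (g : ℤ) (s c) with hg'
    have hg'pos : 0 < g' := Int.gcd_pos_of_ne_zero_right _ hsc
    have hg'dvd : g' ∣ g := by
      have : (g' : ℤ) ∣ (g : ℤ) := Int.gcd_dvd_left _ _
      exact_mod_cast this
    have hg'ne : g' ≠ g := by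
      intro h
      apply hnd
      have : (g' : ℤ) ∣ s c := Int.gcd_dvd_right _ _
      rwa [h] at this
    have hg'lt : g' < g := lt_of_le_of_ne (Nat.le_of_dvd hg hg'dvd) hg'ne
    have hlog : Nat.log 2 g' + 1 ≤ Nat.log 2 g := by
      obtain ⟨k, hk⟩ := hg'dvd
      have hk2 : 2 ≤ k := by
        rcases k with _ | _ | k
        · omega
        · omega
        · omega
      have h2g : g' * 2 ≤ g := by nlinarith
      calc Nat.log 2 g' + 1 = Nat.log 2 (g' * 2) := (Nat.log_mul_base one_lt_two (by omega)).symm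
      _ ≤ Nat.log 2 g := Nat.log_mono_right h2g
    set w'' := x • w + y • s with hw''
    have hw''mem : w'' ∈ Submodule.span ℤ (S : Set (Fin m → ℤ)) :=
      Submodule.add_mem _ (Submodule.smul_mem _ _ hw)
        (Submodule.smul_mem _ _ (Submodule.subset_span hsS))
    have hw''c : w'' c = (g' : ℤ) := by
      show x * w c + y * s c = (g' : ℤ)
      rw [hwc]; exact hxy
    have hgM : g ≤ M := by
      have h1 : (w c).natAbs ≤ norm1 w := coord_le_norm1' w c
      rw [hwc] at h1; simp at h1; omega
    have hM1 : 1 ≤ M := le_trans hg hgM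
    have hw''norm : norm1 w'' ≤ (3 * N + 3) * M := by
      have h1 : norm1 w'' ≤ x.natAbs * norm1 w + y.natAbs * norm1 s := norm1_smul_add_smul' _ _ _ _
      have hxn : x.natAbs ≤ (s c).natAbs := by
        have := hx; rw [Int.abs_eq_natAbs, Int.abs_eq_natAbs] at this; exact_mod_cast this
      have hyn : y.natAbs ≤ g + 1 := by
        have := hy; rw [Int.abs_eq_natAbs] at this
        have h2 : (y.natAbs : ℤ) ≤ (g : ℤ) + 1 := by
          calc (y.natAbs : ℤ) = |y| := (Int.abs_eq_natAbs y).symm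
          _ ≤ |(g : ℤ)| + 1 := hy
          _ = (g : ℤ) + 1 := by rw [abs_of_nonneg (by positivity)]
        exact_mod_cast h2
      have hscN : (s c).natAbs ≤ N := le_trans (coord_le_norm1' s c) (hS s hsS)
      have hsN : norm1 s ≤ N := hS s hsS
      calc norm1 w'' ≤ x.natAbs * norm1 w + y.natAbs * norm1 s := h1
      _ ≤ N * M + (g + 1) * N := by
          apply Nat.add_le_add
          · exact Nat.mul_le_mul (le_trans hxn hscN) hM
          · exact Nat.mul_le_mul hyn hsN
      _ ≤ N * M + (M + M) * N := by
          apply Nat.add_le_add_left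
          apply Nat.mul_le_mul_right
          omega
      _ = 3 * (N * M) := by ring
      _ ≤ (3 * N + 3) * M := by nlinarith
    obtain ⟨w', hw'mem, hw'c, hw'norm⟩ :=
      IH g' hg'lt ((3 * N + 3) * M) w'' hw''mem hw''c hg'pos hw''norm
    refine ⟨w', hw'mem, hw'c, ?_⟩
    calc norm1 w' ≤ (3 * N + 3) * M * (3 * N + 3) ^ (Nat.log 2 g' + 1) := hw'norm
    _ = M * (3 * N + 3) ^ (Nat.log 2 g' + 2) := by ring
    _ ≤ M * (3 * N + 3) ^ (Nat.log 2 g + 1) := by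
        have h1 : 1 ≤ 3 * N + 3 := by linarith
        have h2 : Nat.log 2 g' + 2 ≤ Nat.log 2 g + 1 := by linarith [hlog]
        have h := Nat.pow_le_pow_right h1 h2
        exact Nat.mul_le_mul_left M h

end descent

/-- The "one coordinate elimination" norm growth. -/
def Bz (N : ℕ) : ℕ := N * (3 * N + 3) ^ (Nat.log 2 N + 1)

def stepN (N : ℕ) : ℕ := N + N * Bz N

def iterStep : ℕ → ℕ → ℕ
  | 0, N => N
  | r + 1, N => iterStep r (stepN N)

lemma Bz_mono : Monotone Bz := by
  intro a b h
  exact Nat.mul_le_mul h (Nat.pow_le_pow_left (by omega) _ |>.trans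
    (Nat.pow_le_pow_right (by omega) (by have := Nat.log_mono_right (b := 2) h; omega)))

lemma stepN_mono : Monotone stepN := by
  intro a b h
  exact Nat.add_le_add h (Nat.mul_le_mul h (Bz_mono h))

lemma le_stepN (N : ℕ) : N ≤ stepN N := Nat.le_add_right _ _

lemma iterStep_mono (r : ℕ) : Monotone (iterStep r) := by
  induction r with
  | zero => exact fun a b h => h
  | succ r ih => exact fun a b h => ih (stepN_mono h)

lemma le_iterStep (r N : ℕ) : N ≤ iterStep r N := by
  induction r generalizing N with
  | zero => exact le_rfl
  | succ r ih => exact le_trans (le_stepN N) (ih (stepN N))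

lemma iterStep_fuel_mono (r N : ℕ) : iterStep r N ≤ iterStep (r + 1) N := by
  show iterStep r N ≤ iterStep r (stepN N)
  exact iterStep_mono r (le_stepN N)

lemma gen_small {m : ℕ} : ∀ (r j : ℕ), m ≤ j + r → ∀ (S : Finset (Fin m → ℤ)) (N : ℕ),
    (∀ s ∈ S, ∀ i : Fin m, (i : ℕ) < j → s i = 0) →
    (∀ s ∈ S, norm1 s ≤ N) →
    ∃ T : Finset (Fin m → ℤ), T.card ≤ r ∧ (∀ t ∈ T, norm1 t ≤ iterStep r N) ∧
      Submodule.span ℤ (S : Set (Fin m → ℤ)) = Submodule.span ℤ (T : Set (Fin m → ℤ)) := by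
  intro r
  induction r with
  | zero =>
    intro j hj S N hcoord _
    refine ⟨∅, le_rfl, by simp, ?_⟩
    rw [Finset.coe_empty, Submodule.span_empty]
    apply le_antisymm
    · rw [Submodule.span_le]
      intro s hs
      have : s = 0 := by
        funext i
        exact hcoord s hs i (by omega)
      simp [this]
    · exact bot_le
  | succ r IH =>
    intro j hj S N hcoord hnorm
    by_cases hz : ∀ s ∈ S, ∀ i : Fin m, (i : ℕ) < j + 1 → s i = 0
    · obtain ⟨T, hc, hn, hs⟩ := IH (j + 1) (by omega) S N hz hnorm
      exact ⟨T, le_trans hc (Nat.le_succ r),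
        fun t ht => le_trans (hn t ht) (iterStep_fuel_mono r N), hs⟩
    · push_neg at hz
      obtain ⟨s₀, hs₀S, c, hcj, hs₀c⟩ := hz
      have hcjeq : (c : ℕ) = j := by
        by_contra h
        exact hs₀c (hcoord s₀ hs₀S c (by omega))
      -- initial vector for the descent
      have hN1 : 1 ≤ N := by
        have h1 : 1 ≤ (s₀ c).natAbs := Int.natAbs_pos.mpr hs₀c
        exact le_trans (le_trans h1 (coord_le_norm1' s₀ c)) (hnorm s₀ hs₀S)
      set g : ℕ := (s₀ c).natAbs with hg
      have hgpos : 0 < g := Int.natAbs_pos.mpr hs₀c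
      have hinit : ∃ w₀, w₀ ∈ Submodule.span ℤ (S : Set (Fin m → ℤ)) ∧ w₀ c = (g : ℤ) ∧
          norm1 w₀ ≤ N := by
        rcases Int.natAbs_eq (s₀ c) with h | h
        · exact ⟨s₀, Submodule.subset_span hs₀S, by rw [← h], hnorm s₀ hs₀S⟩
        · refine ⟨-s₀, Submodule.neg_mem _ (Submodule.subset_span hs₀S), ?_, ?_⟩
          · show -(s₀ c) = (g : ℤ)
            omega
          · rw [norm1_neg]; exact hnorm s₀ hs₀S
      obtain ⟨w₀, hw₀mem, hw₀c, hw₀n⟩ := hinit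
      obtain ⟨w, hwmem, hwc0, hwn⟩ := descent S c N hnorm g N w₀ hw₀mem hw₀c hgpos hw₀n
      obtain ⟨D, hDdvd, hDdvd0, hwc⟩ : ∃ D : ℕ, (∀ s ∈ S, ((D : ℕ) : ℤ) ∣ s c) ∧
          D ∣ (s₀ c).natAbs ∧ w c = ((D : ℕ) : ℤ) := by
        refine ⟨S.gcd (fun s => (s c).natAbs), ?_, Finset.gcd_dvd hs₀S, hwc0⟩
        intro s hs
        exact Int.dvd_natAbs.mp (Int.natCast_dvd_natCast.mpr (Finset.gcd_dvd hs))
      clear hwc0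
      have hwBz : norm1 w ≤ Bz N := by
        refine le_trans hwn ?_
        unfold Bz
        apply Nat.mul_le_mul_left
        apply Nat.pow_le_pow_right (by omega)
        have : g ≤ N := le_trans (coord_le_norm1' s₀ c) (hnorm s₀ hs₀S)
        have := Nat.log_mono_right (b := 2) this
        omega
      have hDpos : 0 < D := by
        rcases Nat.eq_zero_or_pos D with h | h
        · exfalso
          rw [h] at hDdvd0
          have h0 := Nat.eq_zero_of_zero_dvd hDdvd0
          omega
        · exact h
      set S' : Finset (Fin m → ℤ) := S.image (fun s => s - (s c / (D : ℤ)) • w) with hS'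
      have hS'coord : ∀ s' ∈ S', ∀ i : Fin m, (i : ℕ) < j + 1 → s' i = 0 := by
        intro s' hs' i hi
        rw [hS', Finset.mem_image] at hs'
        obtain ⟨s, hs, rfl⟩ := hs'
        rcases Nat.lt_or_ge (i : ℕ) j with h | h
        · have h1 : s i = 0 := hcoord s hs i h
          have h2 : w i = 0 :=
            coord_zero_of_mem_span _ i (fun u hu => hcoord u hu i h) hwmem
          show s i - (s c / (D : ℤ)) * w i = 0
          rw [h1, h2]; ring
        · have hieq : i = c := by
            apply Fin.ext
            omega
          subst hieq
          show s i - (s i / (D : ℤ)) * w i = 0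
          rw [hwc]
          rw [Int.ediv_mul_cancel (hDdvd s hs)]
          ring
      have hS'norm : ∀ s' ∈ S', norm1 s' ≤ stepN N := by
        intro s' hs'
        rw [hS', Finset.mem_image] at hs'
        obtain ⟨s, hs, rfl⟩ := hs'
        refine le_trans (norm1_sub_smul s w (s c / (D : ℤ))) ?_
        have hq : (s c / (D : ℤ)).natAbs ≤ N := by
          have h1 : (s c / (D : ℤ)).natAbs * D = (s c).natAbs := by
            have h2 : (s c / (D : ℤ)) * (D : ℤ) = s c := Int.ediv_mul_cancel (hDdvd s hs)
            have := congrArg Int.natAbs h2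
            rwa [Int.natAbs_mul, Int.natAbs_natCast] at this
          have h3 : (s c / (D : ℤ)).natAbs ≤ (s c).natAbs := by
            rw [← h1]
            exact Nat.le_mul_of_pos_right _ hDpos
          exact le_trans h3 (le_trans (coord_le_norm1' s c) (hnorm s hs))
        calc norm1 s + (s c / (D : ℤ)).natAbs * norm1 w ≤ N + N * Bz N :=
          Nat.add_le_add (hnorm s hs) (Nat.mul_le_mul hq hwBz)
        _ = stepN N := rfl
      obtain ⟨T', hT'card, hT'norm, hT'span⟩ := IH (j + 1) (by omega) S' (stepN N) hS'coord hS'norm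
      refine ⟨insert w T', ?_, ?_, ?_⟩
      · exact le_trans (Finset.card_insert_le _ _) (by omega)
      · intro t ht
        rcases Finset.mem_insert.mp ht with h | h
        · subst h
          calc norm1 t ≤ Bz N := hwBz
          _ ≤ stepN N := by unfold stepN; nlinarith
          _ ≤ iterStep r (stepN N) := le_iterStep _ _
          _ = iterStep (r + 1) N := rfl
        · exact hT'norm t h
      · -- span equality
        have hspan1 : Submodule.span ℤ (S : Set (Fin m → ℤ)) =
            Submodule.span ℤ (insert w (S' : Set (Fin m → ℤ))) := by
          apply le_antisymm
          · rw [Submodule.span_le]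
            intro s hs
            have h1 : s - (s c / (D : ℤ)) • w ∈ Submodule.span ℤ (insert w (S' : Set (Fin m → ℤ))) := by
              apply Submodule.subset_span
              apply Set.mem_insert_of_mem
              rw [hS']
              exact_mod_cast Finset.mem_image_of_mem _ hs
            have h2 : w ∈ Submodule.span ℤ (insert w (S' : Set (Fin m → ℤ))) :=
              Submodule.subset_span (Set.mem_insert _ _)
            have h3 := Submodule.add_mem _ h1 (Submodule.smul_mem _ (s c / (D : ℤ)) h2)
            simpa using h3
          · rw [Submodule.span_le]
            intro u hu
            rcases Set.mem_insert_iff.mp hu with h | h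
            · subst h; exact hwmem
            · rw [hS'] at h
              simp only [Finset.coe_image, Set.mem_image] at h
              obtain ⟨s, hs, rfl⟩ := h
              exact Submodule.sub_mem _ (Submodule.subset_span hs)
                (Submodule.smul_mem _ _ hwmem)
        rw [hspan1, Finset.coe_insert, Submodule.span_insert, Submodule.span_insert,
          hT'span]

lemma log_stepN (N : ℕ) : Nat.log 2 (stepN N) + 4 ≤ (Nat.log 2 N + 4) ^ 2 := by
  rcases Nat.eq_zero_or_pos N with rfl | hN
  · simp [stepN, Bz]
  set L := Nat.log 2 N with hL
  have hN2 : N < 2 ^ (L + 1) := Nat.lt_pow_succ_log_self one_lt_two N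
  have h3N : 3 * N + 3 ≤ 2 ^ (L + 3) := by
    have : 2 ^ (L + 3) = 4 * 2 ^ (L + 1) := by ring
    omega
  have hstep : stepN N ≤ (3 * N + 3) ^ (L + 3) := by
    have h1 : stepN N = N + N * N * (3 * N + 3) ^ (L + 1) := by
      rw [stepN, Bz]; ring
    have h2 : (3 * N + 3) ^ (L + 3) = (3 * N + 3) * (3 * N + 3) * (3 * N + 3) ^ (L + 1) := by
      ring
    have h3 : 1 ≤ (3 * N + 3) ^ (L + 1) := Nat.one_le_pow _ _ (by omega)
    nlinarith
  have hpow : stepN N ≤ 2 ^ ((L + 3) * (L + 3)) := by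
    calc stepN N ≤ (3 * N + 3) ^ (L + 3) := hstep
    _ ≤ (2 ^ (L + 3)) ^ (L + 3) := Nat.pow_le_pow_left h3N _
    _ = 2 ^ ((L + 3) * (L + 3)) := by rw [← pow_mul]
  have hlog : Nat.log 2 (stepN N) ≤ (L + 3) * (L + 3) := by
    have := Nat.log_mono_right (b := 2) hpow
    rwa [Nat.log_pow one_lt_two] at this
  nlinarith

lemma log_iterStep (r : ℕ) : ∀ N : ℕ, Nat.log 2 (iterStep r N) + 4 ≤ (Nat.log 2 N + 4) ^ (2 ^ r) := by
  induction r with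
  | zero => intro N; simp [iterStep]
  | succ r ih =>
    intro N
    calc Nat.log 2 (iterStep (r + 1) N) + 4 = Nat.log 2 (iterStep r (stepN N)) + 4 := rfl
    _ ≤ (Nat.log 2 (stepN N) + 4) ^ (2 ^ r) := ih (stepN N)
    _ ≤ ((Nat.log 2 N + 4) ^ 2) ^ (2 ^ r) := Nat.pow_le_pow_left (log_stepN N) _
    _ = (Nat.log 2 N + 4) ^ (2 ^ (r + 1)) := by rw [← pow_mul, pow_succ, mul_comm (2^r) 2]



section balls
variable {m : ℕ}

lemma mem_zmball_iff (n : ℕ) (v : Fin m → ℤ) : v ∈ zmball m n ↔ norm1 v ≤ n := by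
  have h : (∑ i, |v i|) = ((norm1 v : ℕ) : ℤ) := by
    rw [norm1]
    push_cast
    refine Finset.sum_congr rfl fun i _ => ?_
    rw [Int.abs_eq_natAbs]
  constructor
  · intro hv
    have : ((norm1 v : ℕ) : ℤ) ≤ (n : ℤ) := by rw [← h]; exact hv
    exact_mod_cast this
  · intro hv
    show (∑ i, |v i|) ≤ (n : ℤ)
    rw [h]
    exact_mod_cast hv

lemma zmball_mono {j k : ℕ} (h : j ≤ k) : zmball m j ⊆ zmball m k := by
  intro v hv
  rw [mem_zmball_iff] at hv ⊢
  omega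

lemma zmball_finite (n : ℕ) : (zmball m n).Finite := by
  apply Set.Finite.subset (Set.finite_Icc (fun _ : Fin m => -(n : ℤ)) (fun _ => (n : ℤ)))
  intro v hv
  rw [mem_zmball_iff] at hv
  rw [Set.mem_Icc]
  have habs : ∀ i, |v i| ≤ (n : ℤ) := by
    intro i
    rw [Int.abs_eq_natAbs]
    exact_mod_cast (coord_le_norm1' v i).trans hv
  exact ⟨fun i => (abs_le.mp (habs i)).1, fun i => (abs_le.mp (habs i)).2⟩

/-- the cube `[-R, R]^m` as a finset -/
noncomputable def cubeFinset (m R : ℕ) : Finset (Fin m → ℤ) :=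
  Fintype.piFinset (fun _ : Fin m => Finset.Icc (-(R : ℤ)) (R : ℤ))

lemma mem_cubeFinset_of_norm1 {R : ℕ} (v : Fin m → ℤ) (hv : norm1 v ≤ R) :
    v ∈ cubeFinset m R := by
  rw [cubeFinset, Fintype.mem_piFinset]
  intro i
  have := coord_le_norm1' v i
  rw [Finset.mem_Icc]
  omega

lemma cubeFinset_card (R : ℕ) : (cubeFinset m R).card = (2 * R + 1) ^ m := by
  rw [cubeFinset, Fintype.card_piFinset]
  have h : (Finset.Icc (-(R : ℤ)) (R : ℤ)).card = 2 * R + 1 := by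
    rw [Int.card_Icc]
    have : (R : ℤ) + 1 - (-(R : ℤ)) = 2 * R + 1 := by ring
    rw [this]
    omega
  simp [h]

end balls

section traces
variable (m : ℕ)

/-- traces of subgroups on the ball of radius `n` -/
def traces (n : ℕ) : Set (Set (Fin m → ℤ)) :=
  (fun A : AddSubgroup (Fin m → ℤ) => ((A : Set (Fin m → ℤ)) ∩ zmball m n)) '' Set.univ

variable {m}

lemma trace_eq_span_inter {n : ℕ} {τ : Set (Fin m → ℤ)} (hτ : τ ∈ traces m n) :
    τ = ↑(Submodule.span ℤ τ) ∩ zmball m n := by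
  obtain ⟨A, -, rfl⟩ := hτ
  apply le_antisymm
  · intro x hx
    exact ⟨Submodule.subset_span hx, hx.2⟩
  · intro x hx
    have hle : Submodule.span ℤ ((A : Set (Fin m → ℤ)) ∩ zmball m n) ≤
        AddSubgroup.toIntSubmodule A := by
      rw [Submodule.span_le]
      intro y hy
      exact hy.1
    exact ⟨hle hx.1, hx.2⟩

lemma trace_gen {n : ℕ} {τ : Set (Fin m → ℤ)} (hτ : τ ∈ traces m n) :
    ∃ u : Fin m → (Fin m → ℤ), (∀ i, norm1 (u i) ≤ iterStep m n) ∧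
      Submodule.span ℤ (Set.range u) = Submodule.span ℤ τ := by
  have hτfin : τ.Finite := by
    obtain ⟨A, -, rfl⟩ := hτ
    exact (zmball_finite n).subset Set.inter_subset_right
  set S : Finset (Fin m → ℤ) := hτfin.toFinset with hSdef
  have hScoe : (S : Set (Fin m → ℤ)) = τ := hτfin.coe_toFinset
  have hτball : τ ⊆ zmball m n := by
    obtain ⟨A, -, rfl⟩ := hτ
    exact Set.inter_subset_right
  obtain ⟨T, hTcard, hTnorm, hTspan⟩ := gen_small m 0 (by omega) S n
    (fun s _ i hi => absurd hi (by omega))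
    (fun s hs => by
      have hsτ : s ∈ τ := by rw [← hScoe]; exact Finset.mem_coe.mpr hs
      exact (mem_zmball_iff n s).mp (hτball hsτ))
  refine ⟨fun i => T.toList.getD (i : ℕ) 0, fun i => ?_, ?_⟩
  · show norm1 (T.toList.getD (i : ℕ) 0) ≤ iterStep m n
    rcases Nat.lt_or_ge (i : ℕ) T.toList.length with h | h
    · rw [List.getD_eq_getElem _ _ h]
      exact hTnorm _ (Finset.mem_toList.mp (List.getElem_mem h))
    · rw [List.getD_eq_default _ _ h]
      simp [norm1]
  · rw [← hScoe, hTspan]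
    apply le_antisymm
    · rw [Submodule.span_le]
      rintro x ⟨i, rfl⟩
      show T.toList.getD (i : ℕ) 0 ∈ (Submodule.span ℤ (T : Set (Fin m → ℤ)) : Set (Fin m → ℤ))
      rcases Nat.lt_or_ge (i : ℕ) T.toList.length with h | h
      · rw [List.getD_eq_getElem _ _ h]
        exact Submodule.subset_span (Finset.mem_coe.mpr (Finset.mem_toList.mp (List.getElem_mem h)))
      · rw [List.getD_eq_default _ _ h]
        exact Submodule.zero_mem _
    · rw [Submodule.span_le]
      intro t ht
      rw [Finset.mem_coe, ← Finset.mem_toList] at ht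
      obtain ⟨⟨k, hk⟩, hget⟩ := List.mem_iff_get.mp ht
      have hkm : k < m := by
        have := T.length_toList
        omega
      apply Submodule.subset_span
      refine ⟨⟨k, hkm⟩, ?_⟩
      show T.toList.getD ((⟨k, hkm⟩ : Fin m) : ℕ) 0 = t
      have : ((⟨k, hkm⟩ : Fin m) : ℕ) = k := rfl
      rw [this, List.getD_eq_getElem _ _ hk, ← hget]
      simp [List.get_eq_getElem]

lemma traces_finite_card (n : ℕ) :
    (traces m n).Finite ∧ (traces m n).ncard ≤ ((2 * iterStep m n + 1) ^ m) ^ m := by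
  classical
  set R := iterStep m n with hR
  set big : Finset (Fin m → (Fin m → ℤ)) :=
    Fintype.piFinset (fun _ : Fin m => cubeFinset m R) with hbig
  set f : Set (Fin m → ℤ) → (Fin m → (Fin m → ℤ)) := fun τ =>
    if h : ∃ u : Fin m → (Fin m → ℤ), (∀ i, norm1 (u i) ≤ R) ∧
        Submodule.span ℤ (Set.range u) = Submodule.span ℤ τ
    then h.choose else (fun _ _ => 0) with hf
  have hmaps : ∀ τ ∈ traces m n, f τ ∈ (big : Set (Fin m → (Fin m → ℤ))) := by
    intro τ hτ
    obtain ⟨u, hu1, hu2⟩ := trace_gen hτ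
    rw [hf]
    simp only
    rw [dif_pos ⟨u, hu1, hu2⟩]
    generalize_proofs h
    obtain ⟨h1, -⟩ := h.choose_spec
    rw [Finset.mem_coe, hbig, Fintype.mem_piFinset]
    exact fun i => mem_cubeFinset_of_norm1 _ (h1 i)
  have hspan : ∀ τ ∈ traces m n, Submodule.span ℤ (Set.range (f τ)) = Submodule.span ℤ τ := by
    intro τ hτ
    obtain ⟨u, hu1, hu2⟩ := trace_gen hτ
    rw [hf]
    simp only
    rw [dif_pos ⟨u, hu1, hu2⟩]
    generalize_proofs h
    exact h.choose_spec.2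
  have hinj : Set.InjOn f (traces m n) := by
    intro τ1 h1 τ2 h2 heq
    have e1 := hspan τ1 h1
    have e2 := hspan τ2 h2
    rw [heq] at e1
    rw [trace_eq_span_inter h1, trace_eq_span_inter h2, ← e1, ← e2]
  have hfin : (traces m n).Finite := by
    apply Set.Finite.of_finite_image _ hinj
    exact Set.Finite.subset big.finite_toSet (Set.image_subset_iff.mpr hmaps)
  refine ⟨hfin, ?_⟩
  calc (traces m n).ncard ≤ (big : Set (Fin m → (Fin m → ℤ))).ncard :=
    Set.ncard_le_ncard_of_injOn f hmaps hinj big.finite_toSet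
  _ = big.card := Set.ncard_coe_finset _
  _ ≤ ((2 * R + 1) ^ m) ^ m := by
      rw [hbig, Fintype.card_piFinset]
      simp [cubeFinset_card]

end traces

section cover
variable {m : ℕ}

lemma distB_le_of_trace_eq {A B : Set (Fin m → ℤ)} {k : ℕ}
    (h : A ∩ zmball m k = B ∩ zmball m k) :
    distB (zmball m) A B ≤ (2⁻¹ : ℝ) ^ k := by
  have hdown : ∀ j ≤ k, A ∩ zmball m j = B ∩ zmball m j := by
    intro j hj
    ext x
    constructor
    · rintro ⟨hxA, hxj⟩
      have hxk : x ∈ A ∩ zmball m k := ⟨hxA, zmball_mono hj hxj⟩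
      rw [h] at hxk
      exact ⟨hxk.1, hxj⟩
    · rintro ⟨hxB, hxj⟩
      have hxk : x ∈ B ∩ zmball m k := ⟨hxB, zmball_mono hj hxj⟩
      rw [← h] at hxk
      exact ⟨hxk.1, hxj⟩
  have h0 : A ∩ zmball m 0 = B ∩ zmball m 0 := hdown 0 (Nat.zero_le k)
  rw [distB]
  rw [if_pos h0]
  by_cases htop : nuB (zmball m) A B = ⊤
  · rw [if_pos htop]
    positivity
  · rw [if_neg htop]
    have hk : (k : ℕ∞) ≤ nuB (zmball m) A B := by
      rw [nuB]
      exact le_iSup₂ (f := fun (n : ℕ) (_ : A ∩ zmball m n = B ∩ zmball m n) => (n : ℕ∞)) k h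
    have hk' : k ≤ (nuB (zmball m) A B).toNat := by
      lift (nuB (zmball m) A B) to ℕ using htop with n hn
      rw [ENat.toNat_coe]
      exact_mod_cast hk
    exact pow_le_pow_of_le_one (by norm_num) (by norm_num) hk'

lemma coverNum_le (m k : ℕ) {ε : ℝ} (hk : (2⁻¹ : ℝ) ^ k ≤ ε) :
    coverNum (fun A B : AddSubgroup (Fin m → ℤ) =>
        distB (zmball m) (A : Set (Fin m → ℤ)) (B : Set (Fin m → ℤ))) Set.univ ε
      ≤ ((2 * iterStep m k + 1) ^ m) ^ m := by
  classical
  obtain ⟨hfin, hcard⟩ := traces_finite_card (m := m) k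
  set rep : Set (Fin m → ℤ) → AddSubgroup (Fin m → ℤ) := fun τ =>
    if h : ∃ A : AddSubgroup (Fin m → ℤ), (A : Set (Fin m → ℤ)) ∩ zmball m k = τ
    then h.choose else ⊥ with hrep
  set t : Finset (AddSubgroup (Fin m → ℤ)) := hfin.toFinset.image rep with ht
  have hcover : Set.univ ⊆ ⋃ x ∈ t, {y : AddSubgroup (Fin m → ℤ) |
      distB (zmball m) (x : Set (Fin m → ℤ)) (y : Set (Fin m → ℤ)) ≤ ε} := by
    intro B _
    set τ : Set (Fin m → ℤ) := (B : Set (Fin m → ℤ)) ∩ zmball m k with hτ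
    have hτmem : τ ∈ traces m k := ⟨B, Set.mem_univ B, rfl⟩
    have hex : ∃ A : AddSubgroup (Fin m → ℤ), (A : Set (Fin m → ℤ)) ∩ zmball m k = τ :=
      ⟨B, rfl⟩
    have hrepτ : ((rep τ : AddSubgroup (Fin m → ℤ)) : Set (Fin m → ℤ)) ∩ zmball m k = τ := by
      rw [hrep]
      simp only
      rw [dif_pos hex]
      exact hex.choose_spec
    rw [Set.mem_iUnion]
    refine ⟨rep τ, ?_⟩
    rw [Set.mem_iUnion]
    refine ⟨Finset.mem_image_of_mem rep (hfin.mem_toFinset.mpr hτmem), ?_⟩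
    show distB (zmball m) _ _ ≤ ε
    refine le_trans (distB_le_of_trace_eq ?_) hk
    rw [hrepτ, hτ]
  have hmem : t.card ∈ {n : ℕ | ∃ t' : Finset (AddSubgroup (Fin m → ℤ)), t'.card = n ∧
      ↑t' ⊆ (Set.univ : Set (AddSubgroup (Fin m → ℤ))) ∧ Set.univ ⊆ ⋃ x ∈ t',
        {y : AddSubgroup (Fin m → ℤ) | distB (zmball m) (↑x) (↑y) ≤ ε}} :=
    ⟨t, rfl, Set.subset_univ _, hcover⟩
  calc coverNum _ _ _ ≤ t.card := Nat.sInf_le hmem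
  _ ≤ hfin.toFinset.card := Finset.card_image_le
  _ = (traces m k).ncard := by rw [Set.ncard_eq_toFinset_card _ hfin]
  _ ≤ ((2 * iterStep m k + 1) ^ m) ^ m := hcard

end cover

/-- The upper Minkowski dimension of the space `(𝒢(ℤ^m), d_𝒢)` of (normal) subgroups
of `ℤ^m` — equivalently, of the subspace of abelian marked groups on `m`
generators — is zero. -/
theorem abelian_marked_groups_upper_minkowski_zero (m : ℕ) (hm : 1 ≤ m) :
    mdimUpper
      (fun A B : AddSubgroup (Fin m → ℤ) =>
        distB (zmball m) (A : Set (Fin m → ℤ)) (B : Set (Fin m → ℤ)))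
      Set.univ = 0 := by
  classical
  set d := fun A B : AddSubgroup (Fin m → ℤ) =>
    distB (zmball m) (A : Set (Fin m → ℤ)) (B : Set (Fin m → ℤ)) with hd
  set K : ℕ := 2 ^ m with hK
  set ratio : ℝ → ℝ := fun ε =>
    Real.log ((coverNum d Set.univ ε : ℕ) : ℝ) / Real.log (1 / ε) with hratio
  -- the sequence bound
  set hseq : ℕ → ℝ := fun n => ((m * m * (Nat.log 2 (n + 1) + 4) ^ K : ℕ) : ℝ) / (n : ℝ)
    with hhseq
  -- (2) hseq tends to 0
  have hlog_poly : Tendsto (fun n : ℕ => Real.log ((n : ℝ) + 1) ^ K / (n : ℝ)) atTop (𝓝 0) := by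
    have h1 := Real.tendsto_pow_log_div_mul_add_atTop 1 (-1) K one_ne_zero
    have h2 : Tendsto (fun n : ℕ => ((n : ℝ) + 1)) atTop atTop :=
      tendsto_atTop_add_const_right _ 1 tendsto_natCast_atTop_atTop
    have h3 := h1.comp h2
    refine h3.congr fun n => ?_
    show Real.log ((n : ℝ) + 1) ^ K / (1 * ((n : ℝ) + 1) + -1) = _
    norm_num
  have hseq_tendsto : Tendsto hseq atTop (𝓝 0) := by
    set C : ℝ := (m * m) * 2 ^ K / (Real.log 2) ^ K with hC
    have hupper : Tendsto (fun n : ℕ => C * (Real.log ((n : ℝ) + 1) ^ K / (n : ℝ))) atTop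
        (𝓝 0) := by simpa using hlog_poly.const_mul C
    apply tendsto_of_tendsto_of_tendsto_of_le_of_le' tendsto_const_nhds hupper
    · -- 0 ≤ hseq n eventually
      filter_upwards [eventually_ge_atTop 1] with n hn
      apply div_nonneg (Nat.cast_nonneg _) (Nat.cast_nonneg _)
    · -- hseq n ≤ C * ... eventually
      filter_upwards [eventually_ge_atTop 15] with n hn
      have hn1 : (16 : ℝ) ≤ (n : ℝ) + 1 := by
        have : (15 : ℝ) ≤ (n : ℝ) := by exact_mod_cast hn
        linarith
      have hlogb4 : (4 : ℝ) ≤ Real.logb 2 ((n : ℝ) + 1) := by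
        have h16 : Real.logb 2 (16 : ℝ) = 4 := by
          rw [show (16 : ℝ) = 2 ^ (4 : ℕ) by norm_num, Real.logb_pow, Real.logb_self_eq_one] <;>
            norm_num
        rw [← h16]
        exact Real.logb_le_logb_of_le (by norm_num) (by norm_num) hn1
      have hlogb0 : (0 : ℝ) ≤ Real.logb 2 ((n : ℝ) + 1) := by linarith
      have hnat : ((Nat.log 2 (n + 1) : ℕ) : ℝ) ≤ Real.logb 2 ((n : ℝ) + 1) := by
        have := Real.natLog_le_logb (n + 1) 2
        exact_mod_cast this
      have hterm : ((Nat.log 2 (n + 1) + 4 : ℕ) : ℝ) ≤ 2 * Real.logb 2 ((n : ℝ) + 1) := by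
        push_cast
        linarith
      have hpowle : (((Nat.log 2 (n + 1) + 4 : ℕ)) : ℝ) ^ K ≤
          (2 * Real.logb 2 ((n : ℝ) + 1)) ^ K := by
        apply pow_le_pow_left₀ (by positivity) hterm
      have hlog2pos : (0 : ℝ) < Real.log 2 := Real.log_pos (by norm_num)
      have hnpos : (0 : ℝ) < (n : ℝ) := by
        have : (15 : ℝ) ≤ (n : ℝ) := by exact_mod_cast hn
        linarith
      rw [hhseq]
      simp only
      rw [div_le_iff₀ hnpos]
      have hexp : C * (Real.log ((n : ℝ) + 1) ^ K / (n : ℝ)) * (n : ℝ) =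
          C * Real.log ((n : ℝ) + 1) ^ K := by
        field_simp
      rw [hexp]
      have hCexp : C * Real.log ((n : ℝ) + 1) ^ K =
          (m * m : ℝ) * (2 * Real.logb 2 ((n : ℝ) + 1)) ^ K := by
        rw [hC, Real.logb, mul_pow, div_pow]
        field_simp
      rw [hCexp]
      push_cast
      have h1 : ((Nat.log 2 (n + 1) : ℕ) : ℝ) + 4 ≤ 2 * Real.logb 2 ((n : ℝ) + 1) := by
        push_cast at hterm ⊢
        linarith
      have h2 : (((Nat.log 2 (n + 1) : ℕ) : ℝ) + 4) ^ K ≤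
          (2 * Real.logb 2 ((n : ℝ) + 1)) ^ K := by
        apply pow_le_pow_left₀ (by positivity) h1
      have hm0 : (0 : ℝ) ≤ (m : ℝ) * (m : ℝ) := by positivity
      nlinarith
  -- (3) nfun tendsto atTop
  set nfun : ℝ → ℕ := fun ε => Nat.log 2 ⌊1 / ε⌋₊ with hnfun
  have hnfun_tendsto : Tendsto nfun (𝓝[>] (0 : ℝ)) atTop := by
    rw [tendsto_atTop]
    intro M
    have hδ : (0 : ℝ) < ((2 : ℝ) ^ M)⁻¹ := by positivity
    filter_upwards [Ioc_mem_nhdsGT_of_mem ⟨le_rfl, hδ⟩] with ε hε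
    obtain ⟨hε0, hεle⟩ := hε
    have h1ε : (2 : ℝ) ^ M ≤ 1 / ε := by
      rw [le_div_iff₀ hε0]
      calc (2 : ℝ) ^ M * ε ≤ (2 : ℝ) ^ M * ((2 : ℝ) ^ M)⁻¹ := by
            apply mul_le_mul_of_nonneg_left hεle (by positivity)
      _ = 1 := by field_simp
    have hfloor : (2 : ℕ) ^ M ≤ ⌊1 / ε⌋₊ := by
      apply Nat.le_floor
      exact_mod_cast h1ε
    have hfl0 : ⌊1 / ε⌋₊ ≠ 0 := by
      have : (0 : ℕ) < 2 ^ M := Nat.pow_pos (by norm_num)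
      omega
    exact (Nat.le_log_iff_pow_le one_lt_two hfl0).mpr hfloor
  -- (4)+(5) : eventual bounds on ratio
  have hbound : ∀ᶠ ε in 𝓝[>] (0 : ℝ), 0 ≤ ratio ε ∧ ratio ε ≤ hseq (nfun ε) := by
    filter_upwards [Ioc_mem_nhdsGT_of_mem (show (0:ℝ) ∈ Ico (0:ℝ) (1/4) by constructor <;> norm_num)]
      with ε hε
    obtain ⟨hε0, hεle⟩ := hε
    have h1ε4 : (4 : ℝ) ≤ 1 / ε := by
      rw [le_div_iff₀ hε0]; linarith
    have h1εpos : (0 : ℝ) < 1 / ε := by positivity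
    have hfloor4 : (4 : ℕ) ≤ ⌊1 / ε⌋₊ := Nat.le_floor (by exact_mod_cast h1ε4)
    have hfl0 : ⌊1 / ε⌋₊ ≠ 0 := by omega
    set n : ℕ := nfun ε with hn
    have hn2 : 2 ≤ n := by
      rw [hn, hnfun]
      calc 2 = Nat.log 2 4 := by
            rw [show (4 : ℕ) = 2 ^ 2 by norm_num, Nat.log_pow one_lt_two]
      _ ≤ Nat.log 2 ⌊1 / ε⌋₊ := Nat.log_mono_right hfloor4
    -- 2^n ≤ 1/ε
    have h2n : ((2 : ℝ) ^ n) ≤ 1 / ε := by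
      have h1 : (2 : ℕ) ^ n ≤ ⌊1 / ε⌋₊ := Nat.pow_log_le_self 2 hfl0
      calc ((2 : ℝ) ^ n) = (((2 : ℕ) ^ n : ℕ) : ℝ) := by push_cast; ring
      _ ≤ (⌊1 / ε⌋₊ : ℝ) := by exact_mod_cast h1
      _ ≤ 1 / ε := Nat.floor_le (le_of_lt h1εpos)
    -- ε ≥ 2^{-(n+1)}
    have hεge : (2⁻¹ : ℝ) ^ (n + 1) ≤ ε := by
      have h1 : (1 : ℝ) / ε < 2 ^ (n + 1) := by
        calc (1 : ℝ) / ε < (⌊1 / ε⌋₊ : ℝ) + 1 := Nat.lt_floor_add_one _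
        _ ≤ ((2 : ℕ) ^ (n + 1) : ℕ) := by
            have := Nat.lt_pow_succ_log_self one_lt_two ⌊1 / ε⌋₊
            have h2 : ⌊1 / ε⌋₊ + 1 ≤ 2 ^ (n + 1) := this
            exact_mod_cast h2
        _ = (2 : ℝ) ^ (n + 1) := by push_cast; ring
      have h2pos : (0 : ℝ) < 2 ^ (n + 1) := by positivity
      rw [div_lt_iff₀ hε0] at h1
      rw [inv_pow, ← one_div]
      rw [div_le_iff₀ h2pos]
      nlinarith
    have hcov := coverNum_le m (n + 1) hεge
    set R : ℕ := iterStep m (n + 1) with hR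
    have hR1 : 1 ≤ R := le_trans (by omega) (le_iterStep m (n + 1))
    set LR : ℕ := Nat.log 2 R with hLR
    set P : ℕ := (Nat.log 2 (n + 1) + 4) ^ K with hP
    have hLRP : LR + 4 ≤ P := by
      rw [hLR, hP, hK]
      exact log_iterStep m (n + 1)
    -- numerator bound
    have h2R : (2 * R + 1 : ℕ) ≤ 2 ^ (LR + 2) := by
      have h1 : R < 2 ^ (LR + 1) := Nat.lt_pow_succ_log_self one_lt_two R
      have h2 : 2 ^ (LR + 2) = 2 * 2 ^ (LR + 1) := by ring
      omega
    have hlog2pos : (0 : ℝ) < Real.log 2 := Real.log_pos (by norm_num)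
    have hnum : Real.log ((coverNum d Set.univ ε : ℕ) : ℝ) ≤
        ((m * m * P : ℕ) : ℝ) * Real.log 2 := by
      have hA : (2 * (R : ℝ) + 1) ≤ (2 : ℝ) ^ (LR + 2) := by exact_mod_cast h2R
      have hlog2R : Real.log (2 * (R : ℝ) + 1) ≤ ((LR : ℝ) + 2) * Real.log 2 := by
        calc Real.log (2 * (R : ℝ) + 1) ≤ Real.log ((2 : ℝ) ^ (LR + 2)) :=
              Real.log_le_log (by positivity) hA
        _ = ((LR : ℝ) + 2) * Real.log 2 := by rw [Real.log_pow]; push_cast; ring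
      have hLRP' : ((LR : ℝ) + 2) ≤ (P : ℝ) := by exact_mod_cast (by omega : LR + 2 ≤ P)
      have hlogP : Real.log (2 * (R : ℝ) + 1) ≤ (P : ℝ) * Real.log 2 :=
        le_trans hlog2R (mul_le_mul_of_nonneg_right hLRP' hlog2pos.le)
      have hlogCb : Real.log ((((2 * R + 1) ^ m) ^ m : ℕ) : ℝ) ≤
          ((m * m * P : ℕ) : ℝ) * Real.log 2 := by
        have hc : ((((2 * R + 1) ^ m) ^ m : ℕ) : ℝ) = ((2 * (R : ℝ) + 1) ^ m) ^ m := by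
          push_cast; ring
        rw [hc, Real.log_pow, Real.log_pow]
        have hfin : (m : ℝ) * ((m : ℝ) * Real.log (2 * (R : ℝ) + 1)) ≤
            (m : ℝ) * ((m : ℝ) * ((P : ℝ) * Real.log 2)) := by gcongr
        calc (m : ℝ) * ((m : ℝ) * Real.log (2 * (R : ℝ) + 1)) ≤
            (m : ℝ) * ((m : ℝ) * ((P : ℝ) * Real.log 2)) := hfin
        _ = ((m * m * P : ℕ) : ℝ) * Real.log 2 := by push_cast; ring
      rcases Nat.eq_zero_or_pos (coverNum d Set.univ ε) with h0 | hpos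
      · rw [h0]
        simp only [Nat.cast_zero, Real.log_zero]
        positivity
      · calc Real.log ((coverNum d Set.univ ε : ℕ) : ℝ) ≤
            Real.log ((((2 * R + 1) ^ m) ^ m : ℕ) : ℝ) := by
              apply Real.log_le_log (by exact_mod_cast hpos)
              exact_mod_cast hcov
        _ ≤ _ := hlogCb
    -- denominator bound
    have hden : ((n : ℕ) : ℝ) * Real.log 2 ≤ Real.log (1 / ε) := by
      calc ((n : ℕ) : ℝ) * Real.log 2 = Real.log ((2 : ℝ) ^ n) := by rw [Real.log_pow]
      _ ≤ Real.log (1 / ε) := Real.log_le_log (by positivity) h2n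
    have hdenpos : (0 : ℝ) < ((n : ℕ) : ℝ) * Real.log 2 := by
      apply mul_pos _ hlog2pos
      exact_mod_cast (by omega : 0 < n)
    constructor
    · -- nonneg
      apply div_nonneg (Real.log_natCast_nonneg _)
      linarith [hden, hdenpos]
    · -- main bound
      rw [hratio]
      simp only
      calc Real.log ((coverNum d Set.univ ε : ℕ) : ℝ) / Real.log (1 / ε) ≤
          (((m * m * P : ℕ) : ℝ) * Real.log 2) / (((n : ℕ) : ℝ) * Real.log 2) :=
            div_le_div₀ (by positivity) hnum hdenpos hden
      _ = ((m * m * P : ℕ) : ℝ) / ((n : ℕ) : ℝ) :=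
            mul_div_mul_right _ _ (ne_of_gt hlog2pos)
      _ = hseq n := by rw [hhseq, hP]
  -- (6) conclude
  have hratio_tendsto : Tendsto ratio (𝓝[>] (0 : ℝ)) (𝓝 0) := by
    apply tendsto_of_tendsto_of_tendsto_of_le_of_le' tendsto_const_nhds
      (hseq_tendsto.comp hnfun_tendsto)
    · filter_upwards [hbound] with ε h using h.1
    · filter_upwards [hbound] with ε h using h.2
  have hofreal : Tendsto (fun ε => ENNReal.ofReal (ratio ε)) (𝓝[>] (0 : ℝ)) (𝓝 0) := by
    have := ENNReal.tendsto_ofReal hratio_tendsto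
    simpa using this
  rw [mdimUpper]
  exact hofreal.limsup_eq
end

section
/- For every integer n ≥ 1, the minimal number of closed balls of radius 2^{−n} needed to cover (𝒢(ℤ), d_𝒢) equals n + 1; that is, N(𝒢(ℤ), 2^{−n}) = n + 1. -/
open Filter Set
open scoped ENNReal NNReal

namespace MarkedSpace

/-- The ball `B_X(n) = {−n, …, n}` of radius `n` in `ℤ` with respect to the
generating family `(1)`. -/
def zball (n : ℕ) : Set ℤ := {k | |k| ≤ (n : ℤ)}

end MarkedSpace

open MarkedSpace

namespace CoverNumZAux

/-- The subgroup `mℤ`. -/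
def S (m : ℕ) : AddSubgroup ℤ := AddSubgroup.zmultiples (m : ℤ)

lemma mem_S {m : ℕ} {x : ℤ} : x ∈ S m ↔ (m : ℤ) ∣ x := Int.mem_zmultiples_iff

lemma exists_S (H : AddSubgroup ℤ) : ∃ m : ℕ, H = S m := by
  obtain ⟨a, rfl⟩ := Int.subgroup_cyclic H
  refine ⟨a.natAbs, ?_⟩
  rw [← AddSubgroup.zmultiples_eq_closure]
  ext x
  simp only [Int.mem_zmultiples_iff, mem_S]
  exact ⟨fun h => (Int.natAbs_dvd.mpr h : _), fun h => Int.natAbs_dvd.mp h⟩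

lemma S_inj : Function.Injective S := by
  intro a b h
  have ha : (a : ℤ) ∈ S b := h ▸ mem_S.mpr dvd_rfl
  have hb : (b : ℤ) ∈ S a := h.symm ▸ mem_S.mpr dvd_rfl
  rw [mem_S, Int.natCast_dvd_natCast] at ha hb
  exact Nat.dvd_antisymm hb ha

lemma inter_eq_zero_iff (a n : ℕ) :
    (S a : Set ℤ) ∩ zball n = {0} ↔ (a = 0 ∨ n < a) := by
  constructor
  · intro h
    by_contra hc
    push_neg at hc
    obtain ⟨ha, hna⟩ := hc
    have : (a : ℤ) ∈ (S a : Set ℤ) ∩ zball n := by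
      refine ⟨mem_S.mpr dvd_rfl, ?_⟩
      simp only [zball, Set.mem_setOf_eq, abs_of_nonneg (Int.natCast_nonneg a)]
      exact_mod_cast hna
    rw [h] at this
    simp only [Set.mem_singleton_iff] at this
    exact ha (by exact_mod_cast this)
  · intro h
    ext x
    simp only [Set.mem_inter_iff, Set.mem_singleton_iff, mem_S, zball,
      Set.mem_setOf_eq, SetLike.mem_coe]
    constructor
    · rintro ⟨hdvd, habs⟩
      rcases h with h0 | hlt
      · subst h0; simpa using hdvd
      · by_contra hx
        have : (a : ℤ) ≤ |x| := Int.le_of_dvd (abs_pos.mpr hx) (((dvd_abs _ _).mpr hdvd))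
        omega
    · rintro rfl
      exact ⟨dvd_zero _, by simp⟩

lemma agree_iff (a b n : ℕ) :
    (S a : Set ℤ) ∩ zball n = (S b : Set ℤ) ∩ zball n ↔
      (a = b ∨ ((a = 0 ∨ n < a) ∧ (b = 0 ∨ n < b))) := by
  constructor
  · intro h
    by_cases hab : a = b
    · exact Or.inl hab
    refine Or.inr ⟨?_, ?_⟩
    · by_contra hc
      push_neg at hc
      obtain ⟨ha0, hna⟩ := hc
      have hmem : (a : ℤ) ∈ (S b : Set ℤ) ∩ zball n := by
        rw [← h]
        exact ⟨mem_S.mpr dvd_rfl, by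
          simp only [zball, Set.mem_setOf_eq, abs_of_nonneg (Int.natCast_nonneg a)]
          exact_mod_cast hna⟩
      have hba : b ∣ a := by
        have := hmem.1
        rw [SetLike.mem_coe, mem_S, Int.natCast_dvd_natCast] at this
        exact this
      have hb0 : b ≠ 0 := fun h0 => ha0 (by simpa [h0] using hba)
      have hble : b ≤ a := Nat.le_of_dvd (Nat.pos_of_ne_zero ha0) hba
      have hmem' : (b : ℤ) ∈ (S a : Set ℤ) ∩ zball n := by
        rw [h]
        exact ⟨mem_S.mpr dvd_rfl, by
          simp only [zball, Set.mem_setOf_eq, abs_of_nonneg (Int.natCast_nonneg b)]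
          omega⟩
      have hab' : a ∣ b := by
        have := hmem'.1
        rw [SetLike.mem_coe, mem_S, Int.natCast_dvd_natCast] at this
        exact this
      exact hab (Nat.dvd_antisymm hab' hba)
    · by_contra hc
      push_neg at hc
      obtain ⟨hb0, hnb⟩ := hc
      have hmem : (b : ℤ) ∈ (S a : Set ℤ) ∩ zball n := by
        rw [h]
        exact ⟨mem_S.mpr dvd_rfl, by
          simp only [zball, Set.mem_setOf_eq, abs_of_nonneg (Int.natCast_nonneg b)]
          exact_mod_cast hnb⟩
      have hab' : a ∣ b := by
        have := hmem.1
        rw [SetLike.mem_coe, mem_S, Int.natCast_dvd_natCast] at this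
        exact this
      have ha0 : a ≠ 0 := fun h0 => hb0 (by simpa [h0] using hab')
      have hale : a ≤ b := Nat.le_of_dvd (Nat.pos_of_ne_zero hb0) hab'
      have hmem' : (a : ℤ) ∈ (S b : Set ℤ) ∩ zball n := by
        rw [← h]
        exact ⟨mem_S.mpr dvd_rfl, by
          simp only [zball, Set.mem_setOf_eq, abs_of_nonneg (Int.natCast_nonneg a)]
          omega⟩
      have hba : b ∣ a := by
        have := hmem'.1
        rw [SetLike.mem_coe, mem_S, Int.natCast_dvd_natCast] at this
        exact this
      exact hab (Nat.dvd_antisymm hab' hba)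
  · rintro (rfl | ⟨ha, hb⟩)
    · rfl
    · rw [(inter_eq_zero_iff a n).mpr ha, (inter_eq_zero_iff b n).mpr hb]

/-- The "minimal positive generator between two subgroups". -/
def c (a b : ℕ) : ℕ := if a = 0 then b else if b = 0 then a else min a b

lemma c_pos {a b : ℕ} (hab : a ≠ b) : 1 ≤ c a b := by
  unfold c; split_ifs <;> omega

lemma agree_iff' {a b : ℕ} (hab : a ≠ b) (n : ℕ) :
    (S a : Set ℤ) ∩ zball n = (S b : Set ℤ) ∩ zball n ↔ n < c a b := by
  rw [agree_iff]
  unfold c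
  split_ifs <;> omega

lemma nuB_eq {a b : ℕ} (hab : a ≠ b) :
    nuB zball (S a : Set ℤ) (S b : Set ℤ) = ((c a b - 1 : ℕ) : ℕ∞) := by
  unfold nuB
  apply le_antisymm
  · refine iSup₂_le fun m hm => ?_
    rw [agree_iff' hab] at hm
    exact_mod_cast Nat.le_sub_one_of_lt hm
  · refine le_iSup₂ (f := fun (m : ℕ) (_ : (S a : Set ℤ) ∩ zball m = (S b : Set ℤ) ∩ zball m)
      => (m : ℕ∞)) (c a b - 1) ?_
    rw [agree_iff' hab]
    have := c_pos hab
    omega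

lemma c_zero_left (m : ℕ) : c 0 m = m := by unfold c; simp

lemma nuB_self (a : ℕ) : nuB zball (S a : Set ℤ) (S a : Set ℤ) = ⊤ := by
  unfold nuB
  rw [eq_top_iff]
  have htop : (⨆ m : ℕ, (m : ℕ∞)) = ⊤ := by
    rw [ENat.iSup_coe_eq_top]
    rintro ⟨x, hx⟩
    exact absurd (hx (Set.mem_range_self (x + 1))) (by omega)
  rw [← htop]
  exact iSup_le fun m => le_iSup₂ (f := fun (k : ℕ) (_ : (S a : Set ℤ) ∩ zball k =
    (S a : Set ℤ) ∩ zball k) => (k : ℕ∞)) m rfl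

lemma distB_eq (a b : ℕ) :
    distB zball (S a : Set ℤ) (S b : Set ℤ) =
      if a = b then 0 else (2⁻¹ : ℝ) ^ (c a b - 1) := by
  have h0 : (S a : Set ℤ) ∩ zball 0 = (S b : Set ℤ) ∩ zball 0 := by
    rw [(inter_eq_zero_iff a 0).mpr (by omega), (inter_eq_zero_iff b 0).mpr (by omega)]
  unfold distB
  rw [if_pos h0]
  by_cases hab : a = b
  · subst hab
    rw [nuB_self, if_pos rfl, if_pos rfl]
  · rw [nuB_eq hab, if_neg hab, if_neg (by simp), ENat.toNat_coe]

lemma distB_le_iff {a b n : ℕ} :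
    distB zball (S a : Set ℤ) (S b : Set ℤ) ≤ (2⁻¹ : ℝ) ^ n ↔
      (a = b ∨ n + 1 ≤ c a b) := by
  rw [distB_eq]
  split_ifs with hab
  · simp [hab, pow_nonneg]
  · have hpow : (2⁻¹ : ℝ) ^ (c a b - 1) ≤ (2⁻¹ : ℝ) ^ n ↔ n ≤ c a b - 1 :=
      StrictAnti.le_iff_ge (pow_right_strictAnti₀ (by norm_num) (by norm_num : (2⁻¹:ℝ) < 1))
    rw [hpow]
    have := c_pos hab
    constructor
    · intro h; right; omega
    · rintro (h | h); · exact absurd h hab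
      omega

end CoverNumZAux

open CoverNumZAux

/-- For every `n ≥ 1`, the minimal number of closed balls of radius `2^{−n}` needed to
cover `(𝒢(ℤ), d_𝒢)` equals `n + 1`. -/
theorem coverNum_subgroupsZ (n : ℕ) (hn : 1 ≤ n) :
    coverNum (fun A B : AddSubgroup ℤ => distB zball (A : Set ℤ) (B : Set ℤ))
      Set.univ ((2⁻¹ : ℝ) ^ n) = n + 1 := by
  classical
  set P : Set ℕ := {m : ℕ | ∃ t : Finset (AddSubgroup ℤ), t.card = m ∧ ↑t ⊆ (Set.univ : Set (AddSubgroup ℤ)) ∧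
    (Set.univ : Set (AddSubgroup ℤ)) ⊆ ⋃ x ∈ t, {y | distB zball (x : Set ℤ) (y : Set ℤ) ≤ (2⁻¹:ℝ) ^ n}}
    with hP
  have hmem : n + 1 ∈ P := by
    refine ⟨Finset.image S (Finset.range (n + 1)), ?_, Set.subset_univ _, ?_⟩
    · rw [Finset.card_image_of_injective _ S_inj, Finset.card_range]
    · intro H _
      obtain ⟨m, rfl⟩ := exists_S H
      by_cases hm : 1 ≤ m ∧ m ≤ n
      · refine Set.mem_biUnion (Finset.mem_image.mpr ⟨m, Finset.mem_range.mpr (by omega), rfl⟩) ?_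
        simp only [Set.mem_setOf_eq]
        exact distB_le_iff.mpr (Or.inl rfl)
      · refine Set.mem_biUnion (Finset.mem_image.mpr ⟨0, Finset.mem_range.mpr (by omega), rfl⟩) ?_
        simp only [Set.mem_setOf_eq]
        refine distB_le_iff.mpr ?_
        by_cases h0 : m = 0
        · exact Or.inl h0.symm
        · right
          rw [c_zero_left]
          omega
  have hlb : ∀ m ∈ P, n + 1 ≤ m := by
    rintro m ⟨t, hcard, -, hcover⟩
    have hchoice : ∀ i : ℕ, ∃ x ∈ t, distB zball (x : Set ℤ) (S i : Set ℤ) ≤ (2⁻¹:ℝ) ^ n := by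
      intro i
      have := hcover (Set.mem_univ (S i))
      simpa using this
    choose f hf hfd using hchoice
    have hinj : Set.InjOn f ↑(Finset.range (n + 1)) := by
      intro i hi j hj hij
      simp only [Finset.coe_range, Set.mem_Iio] at hi hj
      by_contra hne
      obtain ⟨m', hm'⟩ := exists_S (f i)
      have h1 : m' = i ∨ n + 1 ≤ c m' i := distB_le_iff.mp (hm' ▸ hfd i)
      have h2 : m' = j ∨ n + 1 ≤ c m' j := distB_le_iff.mp ((hij ▸ hm') ▸ hfd j)
      have hc1 : ∀ k : ℕ, k ≠ 0 → c m' k ≤ k := by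
        intro k hk; unfold c; split_ifs <;> omega
      have hc0 : c m' 0 = m' := by unfold c; split_ifs <;> omega
      -- analyze
      rcases Nat.eq_zero_or_pos i with hi0 | hi1
      · subst hi0
        have hj1 : j ≠ 0 := fun h => hne h.symm
        have hmj : m' = j := by
          rcases h2 with h | h
          · exact h
          · have := hc1 j hj1; omega
        rcases h1 with h | h
        · omega
        · rw [hc0] at h; omega
      · have hmi : m' = i := by
          rcases h1 with h | h
          · exact h
          · have := hc1 i (by omega); omega
        rcases Nat.eq_zero_or_pos j with hj0 | hj1
        · subst hj0
          rcases h2 with h | h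
          · omega
          · rw [hc0] at h; omega
        · have hmj : m' = j := by
            rcases h2 with h | h
            · exact h
            · have := hc1 j (by omega); omega
          omega
    calc n + 1 = (Finset.range (n + 1)).card := (Finset.card_range _).symm
      _ ≤ t.card := Finset.card_le_card_of_injOn f (fun i hi => hf i) hinj
      _ = m := hcard
  have : coverNum (fun A B : AddSubgroup ℤ => distB zball (A : Set ℤ) (B : Set ℤ))
      Set.univ ((2⁻¹ : ℝ) ^ n) = sInf P := rfl
  rw [this]
  exact le_antisymm (Nat.sInf_le hmem) (le_csInf ⟨_, hmem⟩ hlb)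
end

section
/- Let G be a finitely generated group with ordered generating family X, and let β(n) = |B_X(n)|. Then the lower Minkowski dimension of (𝒫(G), d_𝒫) equals lim inf_{n→∞} β(n)/n and the upper Minkowski dimension of (𝒫(G), d_𝒫) equals lim sup_{n→∞} β(n)/n. -/
open Filter Set
open scoped ENNReal NNReal

namespace MarkedSpace

/-- `wordBall X n` : the ball `B_X(n)` of radius `n` in a group `G` with respect to a
generating family `X`, i.e. the set of elements that are products of at most `n`
elements of `X ∪ X⁻¹`. -/
def wordBall {G : Type*} [Group G] (X : Set G) (n : ℕ) : Set G :=
  {g | ∃ l : List G, l.length ≤ n ∧ (∀ x ∈ l, x ∈ X ∨ x⁻¹ ∈ X) ∧ l.prod = g}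

end MarkedSpace

namespace MarkedSpace

section Aux

variable {G : Type*} [Group G] {X : Set G}

lemma wordBall_mono {m n : ℕ} (h : m ≤ n) : wordBall X m ⊆ wordBall X n := by
  rintro g ⟨l, hl, hx, hp⟩
  exact ⟨l, hl.trans h, hx, hp⟩

lemma one_mem_wordBall (n : ℕ) : (1 : G) ∈ wordBall X n :=
  ⟨[], by simp⟩

lemma wordBall_finite (hXfin : X.Finite) : ∀ n, (wordBall X n).Finite := by
  intro n
  induction n with
  | zero =>
    apply Set.Finite.subset (Set.finite_singleton (1 : G))
    rintro g ⟨l, hl, -, hp⟩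
    simp only [Nat.le_zero, List.length_eq_zero_iff] at hl
    simp [hl] at hp
    simp [← hp]
  | succ n ih =>
    apply Set.Finite.subset (ih.union (((hXfin.union hXfin.inv).biUnion
      (fun x _ => ih.image (fun g => x * g)))))
    rintro g ⟨l, hl, hx, hp⟩
    match l with
    | [] => exact Or.inl ⟨[], by simp, by simp, hp⟩
    | a :: t =>
      have ha : a ∈ X ∪ X⁻¹ := by
        rcases hx a (by simp) with h | h
        · exact Or.inl h
        · exact Or.inr (Set.mem_inv.2 h)
      refine Or.inr (Set.mem_biUnion ha ?_)
      refine ⟨t.prod, ⟨t, ?_, fun x hx' => hx x (by simp [hx']), rfl⟩, ?_⟩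
      · simpa using hl
      · simpa using hp

lemma agree_mono {A B : Set G} {m : ℕ}
    (hab : A ∩ wordBall X m = B ∩ wordBall X m) {k : ℕ} (hk : k ≤ m) :
    A ∩ wordBall X k = B ∩ wordBall X k := by
  ext g
  constructor
  · rintro ⟨hg, hk'⟩
    have : g ∈ B ∩ wordBall X m := hab ▸ (⟨hg, wordBall_mono hk hk'⟩ : g ∈ A ∩ wordBall X m)
    exact ⟨this.1, hk'⟩
  · rintro ⟨hg, hk'⟩
    have : g ∈ A ∩ wordBall X m := hab.symm ▸ (⟨hg, wordBall_mono hk hk'⟩ : g ∈ B ∩ wordBall X m)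
    exact ⟨this.1, hk'⟩

lemma le_nuB {A B : Set G} {n : ℕ} (h : A ∩ wordBall X n = B ∩ wordBall X n) :
    (n : ℕ∞) ≤ nuB (wordBall X) A B :=
  le_iSup₂ (f := fun (n : ℕ) (_ : A ∩ wordBall X n = B ∩ wordBall X n) => (n : ℕ∞)) n h

lemma nuB_le {A B : Set G} {n : ℕ} (h : A ∩ wordBall X (n + 1) ≠ B ∩ wordBall X (n + 1)) :
    nuB (wordBall X) A B ≤ (n : ℕ∞) := by
  refine iSup₂_le fun m hm => ?_
  have hmn : m ≤ n := by
    by_contra hc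
    exact h (agree_mono hm (by omega))
  exact_mod_cast hmn

lemma distB_le_of_agree {A B : Set G} {n : ℕ}
    (h : A ∩ wordBall X n = B ∩ wordBall X n) :
    distB (wordBall X) A B ≤ (2⁻¹ : ℝ) ^ n := by
  have h0 : A ∩ wordBall X 0 = B ∩ wordBall X 0 := agree_mono h (Nat.zero_le n)
  unfold distB
  rw [if_pos h0]
  split_ifs with ht
  · positivity
  · have hn : (n : ℕ∞) ≤ nuB (wordBall X) A B := le_nuB h
    lift nuB (wordBall X) A B to ℕ using ht with k hk
    have : n ≤ k := by exact_mod_cast hn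
    simpa using pow_le_pow_of_le_one (by norm_num : (0:ℝ) ≤ 2⁻¹) (by norm_num) this

lemma le_distB_of_disagree {A B : Set G} {n : ℕ}
    (h : A ∩ wordBall X n ≠ B ∩ wordBall X n) :
    (2⁻¹ : ℝ) ^ n * 2 ≤ distB (wordBall X) A B := by
  unfold distB
  split_ifs with h0 ht
  · -- agree at 0, nuB = ⊤ : impossible
    exfalso
    rcases Nat.eq_zero_or_pos n with rfl | hn
    · exact h h0
    · obtain ⟨m, rfl⟩ : ∃ m, n = m + 1 := ⟨n - 1, by omega⟩
      have := nuB_le h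
      rw [ht] at this
      simp at this
  · -- agree at 0, nuB finite
    obtain ⟨m, hm⟩ : ∃ m, n = m + 1 := by
      rcases Nat.eq_zero_or_pos n with rfl | hn
      · exact absurd h0 h
      · exact ⟨n - 1, by omega⟩
    subst hm
    have hν : nuB (wordBall X) A B ≤ (m : ℕ∞) := nuB_le h
    lift nuB (wordBall X) A B to ℕ using ht with k hk
    have hkm : k ≤ m := by exact_mod_cast hν
    have : (2⁻¹ : ℝ) ^ (m + 1) * 2 = (2⁻¹ : ℝ) ^ m := by ring
    rw [this]
    simpa using pow_le_pow_of_le_one (by norm_num : (0:ℝ) ≤ 2⁻¹) (by norm_num) hkm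
  · -- disagree at 0
    have : (2⁻¹ : ℝ) ^ n ≤ 1 := pow_le_one₀ (by norm_num) (by norm_num)
    nlinarith


lemma coverNum_eq (hXfin : X.Finite) {n : ℕ} {ε : ℝ} (h1 : (2⁻¹:ℝ)^n ≤ ε)
    (h2 : ε < (2⁻¹:ℝ)^n * 2) :
    coverNum (distB (wordBall X)) (Set.univ : Set (Set G)) ε = 2 ^ (wordBall X n).ncard := by
  classical
  set F : Finset G := (wordBall_finite hXfin n).toFinset with hF
  have hFcard : F.card = (wordBall X n).ncard :=
    (Set.ncard_eq_toFinset_card _ (wordBall_finite hXfin n)).symm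
  set T : Finset (Set G) := F.powerset.image ((↑) : Finset G → Set G) with hT
  have hTcard : T.card = 2 ^ (wordBall X n).ncard := by
    rw [hT, Finset.card_image_of_injective _ Finset.coe_injective, Finset.card_powerset, hFcard]
  have hTsub : ∀ S ∈ T, S ⊆ wordBall X n := by
    intro S hS
    rw [hT, Finset.mem_image] at hS
    obtain ⟨s, hs, rfl⟩ := hS
    intro g hg
    exact (Set.Finite.mem_toFinset _).1 (Finset.mem_powerset.1 hs (Finset.mem_coe.1 hg))
  have hmemT : ∀ A : Set G, (A ∩ wordBall X n) ∈ T := by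
    intro A
    rw [hT, Finset.mem_image]
    refine ⟨F.filter (· ∈ A), Finset.mem_powerset.2 (Finset.filter_subset _ _), ?_⟩
    ext g
    simp only [Finset.coe_filter, Set.mem_setOf_eq, Set.mem_inter_iff, hF,
      Set.Finite.mem_toFinset]
    tauto
  have hcov : 2 ^ (wordBall X n).ncard ∈ {m : ℕ | ∃ t : Finset (Set G), t.card = m ∧
      ↑t ⊆ (Set.univ : Set (Set G)) ∧
      (Set.univ : Set (Set G)) ⊆ ⋃ x ∈ t, {y | distB (wordBall X) x y ≤ ε}} := by
    refine ⟨T, hTcard, Set.subset_univ _, ?_⟩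
    intro A _
    refine Set.mem_iUnion₂.2 ⟨A ∩ wordBall X n, hmemT A, ?_⟩
    have hag : (A ∩ wordBall X n) ∩ wordBall X n = A ∩ wordBall X n := by
      rw [Set.inter_assoc, Set.inter_self]
    exact le_trans (distB_le_of_agree hag) h1
  refine le_antisymm (Nat.sInf_le hcov) (le_csInf ⟨_, hcov⟩ ?_)
  rintro m ⟨t, hcard, -, hcovt⟩
  by_contra hlt
  push_neg at hlt
  have hlt' : t.card < T.card := by omega
  have key : ∀ S : Set G, ∃ C, (S ∈ T → C ∈ t ∧ distB (wordBall X) C S ≤ ε) := by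
    intro S
    by_cases hS : S ∈ T
    · have := hcovt (Set.mem_univ S)
      obtain ⟨C, hC, hd⟩ := Set.mem_iUnion₂.1 this
      exact ⟨C, fun _ => ⟨hC, hd⟩⟩
    · exact ⟨∅, fun h => absurd h hS⟩
  choose f hf using key
  obtain ⟨S, hS, S', hS', hne, heq⟩ :=
    Finset.exists_ne_map_eq_of_card_lt_of_maps_to hlt' (fun S hS => (hf S hS).1)
  have hag : ∀ S₀ ∈ T, f S₀ ∩ wordBall X n = S₀ ∩ wordBall X n := by
    intro S₀ hS₀
    by_contra hd
    have := le_distB_of_disagree hd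
    have h2' := (hf S₀ hS₀).2
    linarith
  have : S ∩ wordBall X n = S' ∩ wordBall X n := by
    rw [← hag S hS, ← hag S' hS', heq]
  exact hne (by
    rw [← Set.inter_eq_self_of_subset_left (hTsub S hS),
      ← Set.inter_eq_self_of_subset_left (hTsub S' hS'), this])

lemma wordBall_ncard_pos (hXfin : X.Finite) (n : ℕ) : 1 ≤ (wordBall X n).ncard :=
  (Set.ncard_pos (wordBall_finite hXfin n)).2 ⟨1, one_mem_wordBall n⟩

end Aux

/-- the scale index associated to `ε`. -/
noncomputable def Nr (ε : ℝ) : ℕ := sInf {n : ℕ | (2⁻¹:ℝ)^n ≤ ε}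

lemma Nr_spec {ε : ℝ} (hε : 0 < ε) : (2⁻¹:ℝ)^(Nr ε) ≤ ε := by
  have hne : {n : ℕ | (2⁻¹:ℝ)^n ≤ ε}.Nonempty := by
    obtain ⟨n, hn⟩ := exists_pow_lt_of_lt_one hε (by norm_num : (2⁻¹:ℝ) < 1)
    exact ⟨n, hn.le⟩
  exact Nat.sInf_mem hne

lemma Nr_min {ε : ℝ} {m : ℕ} (hm : m < Nr ε) : ε < (2⁻¹:ℝ)^m :=
  lt_of_not_ge (fun h => (Nat.notMem_of_lt_sInf hm) h)

lemma Nr_pos {ε : ℝ} (hε0 : 0 < ε) (hε1 : ε < 1) : 1 ≤ Nr ε := by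
  rcases Nat.eq_zero_or_pos (Nr ε) with h | h
  · have := Nr_spec hε0
    rw [h] at this
    simp at this
    linarith
  · exact h

lemma Nr_lt {ε : ℝ} (hε0 : 0 < ε) (hε1 : ε < 1) : ε < (2⁻¹:ℝ)^(Nr ε) * 2 := by
  have h1 := Nr_pos hε0 hε1
  have := Nr_min (ε := ε) (m := Nr ε - 1) (by omega)
  calc ε < (2⁻¹:ℝ)^(Nr ε - 1) := this
    _ = (2⁻¹:ℝ)^(Nr ε) * 2 := by
      obtain ⟨m, hm⟩ : ∃ m, Nr ε = m + 1 := ⟨Nr ε - 1, by omega⟩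
      rw [hm]
      simp [pow_succ]

lemma Nr_pow (n : ℕ) : Nr ((2⁻¹:ℝ)^n) = n := by
  have hmem : n ∈ {m : ℕ | (2⁻¹:ℝ)^m ≤ (2⁻¹:ℝ)^n} := by simp
  refine le_antisymm (Nat.sInf_le hmem) (le_csInf ⟨n, hmem⟩ ?_)
  intro m hm
  by_contra hc
  push_neg at hc
  have : (2⁻¹:ℝ) ^ n < (2⁻¹:ℝ) ^ m :=
    pow_lt_pow_right_of_lt_one₀ (by norm_num) (by norm_num) hc
  have hm' : (2⁻¹:ℝ) ^ m ≤ (2⁻¹:ℝ) ^ n := hm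
  linarith

lemma Nr_tendsto : Tendsto Nr (nhdsWithin (0:ℝ) (Set.Ioi 0)) atTop := by
  refine tendsto_atTop.2 fun k => ?_
  filter_upwards [Ioo_mem_nhdsGT (pow_pos (by norm_num : (0:ℝ) < 2⁻¹) k)] with ε hε
  by_contra hc
  push_neg at hc
  have h1 := Nr_spec hε.1
  have h2 : (2⁻¹:ℝ)^k ≤ (2⁻¹:ℝ)^(Nr ε) :=
    pow_le_pow_of_le_one (by norm_num) (by norm_num) hc.le
  linarith [hε.2]

section Aux2

variable {G : Type*} [Group G] {X : Set G}

lemma g_eq (hXfin : X.Finite) {ε : ℝ} (hε0 : 0 < ε) (hε1 : ε < 1) :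
    ENNReal.ofReal (Real.log (coverNum (distB (wordBall X)) (Set.univ : Set (Set G)) ε : ℝ)
        / Real.log (1/ε))
      = ENNReal.ofReal (((wordBall X (Nr ε)).ncard : ℝ) * Real.log 2 / Real.log (1/ε)) := by
  rw [coverNum_eq hXfin (Nr_spec hε0) (Nr_lt hε0 hε1)]
  congr 2
  push_cast
  rw [Real.log_pow]

lemma bound1 (hXfin : X.Finite) {ε : ℝ} (hε0 : 0 < ε) (hε1 : ε < 1) :
    ENNReal.ofReal (((wordBall X (Nr ε)).ncard : ℝ) / (Nr ε : ℝ)) ≤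
      ENNReal.ofReal (Real.log (coverNum (distB (wordBall X)) (Set.univ : Set (Set G)) ε : ℝ)
        / Real.log (1/ε)) := by
  rw [g_eq hXfin hε0 hε1]
  apply ENNReal.ofReal_le_ofReal
  set N := Nr ε with hN
  set β : ℝ := ((wordBall X N).ncard : ℝ) with hβ
  have hβ0 : (0:ℝ) ≤ β := Nat.cast_nonneg _
  have hN1 : 1 ≤ N := Nr_pos hε0 hε1
  have hN0 : (0:ℝ) < (N:ℝ) := by exact_mod_cast hN1
  have hlog2 : (0:ℝ) < Real.log 2 := Real.log_pos (by norm_num)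
  have hL0 : 0 < Real.log (1/ε) := Real.log_pos (by
    rw [one_div]
    exact (one_lt_inv₀ hε0).2 hε1)
  have hLle : Real.log (1/ε) ≤ (N:ℝ) * Real.log 2 := by
    have h2 : (1:ℝ)/ε ≤ 2 ^ N := by
      rw [div_le_iff₀ hε0]
      have hs := Nr_spec hε0
      have hp : (0:ℝ) < (2:ℝ)^N := by positivity
      calc (1:ℝ) = 2^N * (2⁻¹:ℝ)^N := by rw [← mul_pow]; norm_num
        _ ≤ 2^N * ε := by nlinarith
    calc Real.log (1/ε) ≤ Real.log ((2:ℝ)^N) := Real.log_le_log (by positivity) h2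
      _ = (N:ℝ) * Real.log 2 := by rw [Real.log_pow]
  rw [div_le_div_iff₀ hN0 hL0]
  have := mul_le_mul_of_nonneg_left hLle hβ0
  nlinarith

lemma bound2 (hXfin : X.Finite) {ε : ℝ} (hε0 : 0 < ε) (hε1 : ε < 1) (hN2 : 2 ≤ Nr ε) :
    ENNReal.ofReal (Real.log (coverNum (distB (wordBall X)) (Set.univ : Set (Set G)) ε : ℝ)
        / Real.log (1/ε)) ≤
      ENNReal.ofReal (((wordBall X (Nr ε)).ncard : ℝ) / ((Nr ε : ℝ) - 1)) := by
  rw [g_eq hXfin hε0 hε1]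
  apply ENNReal.ofReal_le_ofReal
  set N := Nr ε with hN
  set β : ℝ := ((wordBall X N).ncard : ℝ) with hβ
  have hβ0 : (0:ℝ) ≤ β := Nat.cast_nonneg _
  have hN2' : (2:ℝ) ≤ (N:ℝ) := by exact_mod_cast hN2
  have hlog2 : (0:ℝ) < Real.log 2 := Real.log_pos (by norm_num)
  have hL1 : ((N:ℝ) - 1) * Real.log 2 ≤ Real.log (1/ε) := by
    have h2 : (2:ℝ)^(N-1) ≤ 1/ε := by
      have hmin := Nr_min (ε := ε) (m := N - 1) (by omega)
      rw [le_div_iff₀ hε0]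
      have hp : (2:ℝ)^(N-1) * (2⁻¹:ℝ)^(N-1) = 1 := by rw [← mul_pow]; norm_num
      nlinarith [pow_pos (show (0:ℝ) < 2 by norm_num) (N-1)]
    calc ((N:ℝ)-1) * Real.log 2 = Real.log ((2:ℝ)^(N-1)) := by
          rw [Real.log_pow]
          push_cast [Nat.cast_sub (by omega : 1 ≤ N)]
          ring
      _ ≤ Real.log (1/ε) := Real.log_le_log (by positivity) h2
  have hL0 : (0:ℝ) < Real.log (1/ε) := lt_of_lt_of_le (by nlinarith) hL1
  rw [div_le_div_iff₀ hL0 (by linarith : (0:ℝ) < (N:ℝ) - 1)]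
  have := mul_le_mul_of_nonneg_left hL1 hβ0
  nlinarith

lemma hu_tendsto : Tendsto (fun n : ℕ => (2⁻¹:ℝ)^n) atTop (nhdsWithin (0:ℝ) (Set.Ioi 0)) := by
  rw [tendsto_nhdsWithin_iff]
  exact ⟨tendsto_pow_atTop_nhds_zero_of_lt_one (by norm_num) (by norm_num),
    Eventually.of_forall fun n => pow_pos (by norm_num : (0:ℝ) < 2⁻¹) n⟩

lemma g_pow_eq (hXfin : X.Finite) (n : ℕ) :
    ENNReal.ofReal (Real.log
        (coverNum (distB (wordBall X)) (Set.univ : Set (Set G)) ((2⁻¹:ℝ)^n) : ℝ)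
        / Real.log (1/(2⁻¹:ℝ)^n))
      = ENNReal.ofReal (((wordBall X n).ncard : ℝ) / (n : ℝ)) := by
  rcases Nat.eq_zero_or_pos n with rfl | hn
  · simp
  · have hε0 : (0:ℝ) < (2⁻¹:ℝ)^n := pow_pos (by norm_num) n
    have hε1 : ((2⁻¹:ℝ))^n < 1 := pow_lt_one₀ (by norm_num) (by norm_num) (by omega)
    rw [g_eq hXfin hε0 hε1, Nr_pow]
    congr 1
    rw [one_div, ← inv_pow, inv_inv, Real.log_pow]
    rw [mul_comm ((n:ℕ):ℝ) (Real.log 2)]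
    rw [mul_comm (((wordBall X n).ncard : ℕ):ℝ) (Real.log 2)]
    rw [mul_div_mul_left _ _ (ne_of_gt (Real.log_pos (by norm_num)))]

set_option maxHeartbeats 1000000 in
lemma liminf_aux (hXfin : X.Finite) :
    liminf (fun ε : ℝ => ENNReal.ofReal (Real.log
        (coverNum (distB (wordBall X)) (Set.univ : Set (Set G)) ε : ℝ) / Real.log (1 / ε)))
      (nhdsWithin 0 (Set.Ioi 0)) =
      liminf (fun n : ℕ => ENNReal.ofReal (((wordBall X n).ncard : ℝ) / (n : ℝ))) atTop := by
  set g : ℝ → ℝ≥0∞ := fun ε => ENNReal.ofReal (Real.log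
      (coverNum (distB (wordBall X)) (Set.univ : Set (Set G)) ε : ℝ) / Real.log (1 / ε))
    with hgdef
  set h : ℕ → ℝ≥0∞ := fun n => ENNReal.ofReal (((wordBall X n).ncard : ℝ) / (n : ℝ)) with hhdef
  refine le_antisymm ?_ ?_
  · have h1 : liminf g (nhdsWithin (0:ℝ) (Set.Ioi 0)) ≤
        liminf g (map (fun n : ℕ => (2⁻¹:ℝ)^n) atTop) :=
      liminf_le_liminf_of_le hu_tendsto
    rw [← liminf_comp] at h1
    refine h1.trans (le_of_eq ?_)
    exact liminf_congr (Eventually.of_forall fun n => g_pow_eq hXfin n)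
  · have hmap : map Nr (nhdsWithin (0:ℝ) (Set.Ioi 0)) ≤ atTop := Nr_tendsto
    have h2 : liminf h atTop ≤ liminf h (map Nr (nhdsWithin (0:ℝ) (Set.Ioi 0))) :=
      liminf_le_liminf_of_le hmap
    rw [← liminf_comp] at h2
    refine h2.trans (liminf_le_liminf ?_)
    filter_upwards [Ioo_mem_nhdsGT one_pos] with ε hε
    exact bound1 hXfin hε.1 hε.2

set_option maxHeartbeats 1000000 in
lemma limsup_aux (hXfin : X.Finite) :
    limsup (fun ε : ℝ => ENNReal.ofReal (Real.log
        (coverNum (distB (wordBall X)) (Set.univ : Set (Set G)) ε : ℝ) / Real.log (1 / ε)))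
      (nhdsWithin 0 (Set.Ioi 0)) =
      limsup (fun n : ℕ => ENNReal.ofReal (((wordBall X n).ncard : ℝ) / (n : ℝ))) atTop := by
  set g : ℝ → ℝ≥0∞ := fun ε => ENNReal.ofReal (Real.log
      (coverNum (distB (wordBall X)) (Set.univ : Set (Set G)) ε : ℝ) / Real.log (1 / ε))
    with hgdef
  set h : ℕ → ℝ≥0∞ := fun n => ENNReal.ofReal (((wordBall X n).ncard : ℝ) / (n : ℝ)) with hhdef
  refine le_antisymm ?_ ?_
  · refine le_of_forall_gt_imp_ge_of_dense fun c hc => ?_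
    by_cases hctop : c = ⊤
    · simp [hctop]
    have hLtop : limsup h atTop ≠ ⊤ := ne_top_of_lt hc
    have hLc : (limsup h atTop).toReal < c.toReal := (ENNReal.toReal_lt_toReal hLtop hctop).2 hc
    set r : ℝ := ((limsup h atTop).toReal + c.toReal)/2 with hrdef
    have hLr : limsup h atTop < ENNReal.ofReal r :=
      (ENNReal.lt_ofReal_iff_toReal_lt hLtop).2 (by rw [hrdef]; linarith)
    have hrc : r < c.toReal := by rw [hrdef]; linarith
    have hev : ∀ᶠ n in atTop, h n < ENNReal.ofReal r := eventually_lt_of_limsup_lt hLr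
    have hr0 : 0 < r := by
      obtain ⟨n, hn⟩ := hev.exists
      exact ENNReal.ofReal_pos.1 (lt_of_le_of_lt zero_le hn)
    have hβr : ∀ᶠ n in atTop, ((wordBall X n).ncard : ℝ) ≤ r * n := by
      filter_upwards [hev, eventually_ge_atTop 1] with n hn hn1
      have hlt : ((wordBall X n).ncard : ℝ) / n < r := by
        have : h n < ENNReal.ofReal r := hn
        rw [hhdef] at this
        exact (ENNReal.ofReal_lt_ofReal_iff hr0).1 this
      have hn0 : (0:ℝ) < n := by exact_mod_cast hn1
      calc ((wordBall X n).ncard : ℝ) = (((wordBall X n).ncard : ℝ)/n) * n := by field_simp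
        _ ≤ r * n := by nlinarith
    obtain ⟨M, hM⟩ := eventually_atTop.1 hβr
    refine limsup_le_of_le (by isBoundedDefault) ?_
    filter_upwards [Ioo_mem_nhdsGT one_pos,
      Nr_tendsto.eventually
        (eventually_ge_atTop (max (max M 2) (⌈c.toReal / (c.toReal - r)⌉₊ + 1)))] with ε hε hN
    have hε0 := hε.1
    have hε1 := hε.2
    have hN2 : 2 ≤ Nr ε := (le_max_of_le_left (le_max_right M 2)).trans hN
    have hNM : M ≤ Nr ε := (le_max_of_le_left (le_max_left M 2)).trans hN
    have hNc : (⌈c.toReal / (c.toReal - r)⌉₊ + 1) ≤ Nr ε := (le_max_right _ _).trans hN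
    refine le_trans (bound2 hXfin hε0 hε1 hN2) ?_
    have hN2' : (2:ℝ) ≤ (Nr ε : ℝ) := by exact_mod_cast hN2
    have hβN := hM (Nr ε) hNM
    have hcr : 0 < c.toReal - r := by linarith
    have hceil : c.toReal/(c.toReal - r) ≤ ((Nr ε : ℕ):ℝ) :=
      le_trans (Nat.le_ceil _)
        (by exact_mod_cast (by omega : ⌈c.toReal/(c.toReal - r)⌉₊ ≤ Nr ε))
    have hkey : ((wordBall X (Nr ε)).ncard : ℝ) / ((Nr ε : ℝ) - 1) ≤ c.toReal := by
      rw [div_le_iff₀ (by linarith : (0:ℝ) < (Nr ε:ℝ) - 1)]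
      have h4 := (div_le_iff₀ hcr).1 hceil
      nlinarith
    calc ENNReal.ofReal (((wordBall X (Nr ε)).ncard : ℝ) / ((Nr ε : ℝ) - 1))
        ≤ ENNReal.ofReal c.toReal := ENNReal.ofReal_le_ofReal hkey
      _ = c := ENNReal.ofReal_toReal hctop
  · have h1 : limsup g (map (fun n : ℕ => (2⁻¹:ℝ)^n) atTop) ≤
        limsup g (nhdsWithin (0:ℝ) (Set.Ioi 0)) :=
      limsup_le_limsup_of_le hu_tendsto
    rw [← limsup_comp] at h1
    refine le_trans (le_of_eq ?_) h1
    exact limsup_congr (Eventually.of_forall fun n => (g_pow_eq hXfin n).symm)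

end Aux2

end MarkedSpace

open MarkedSpace Filter

/-- For a finitely generated group `G` with generating family `X` and
`β(n) = |B_X(n)|`, the lower (resp. upper) Minkowski dimension of `(𝒫(G), d_𝒫)`
equals `liminf β(n)/n` (resp. `limsup β(n)/n`). -/
theorem minkowski_powerset_eq_growth {G : Type*} [Group G] (X : Set G) (hXfin : X.Finite)
    (hXgen : Subgroup.closure X = ⊤) :
    mdimLower (distB (wordBall X)) (Set.univ : Set (Set G)) =
        liminf (fun n : ℕ => ENNReal.ofReal (((wordBall X n).ncard : ℝ) / (n : ℝ))) atTop ∧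
      mdimUpper (distB (wordBall X)) (Set.univ : Set (Set G)) =
        limsup (fun n : ℕ => ENNReal.ofReal (((wordBall X n).ncard : ℝ) / (n : ℝ))) atTop :=
  ⟨MarkedSpace.liminf_aux hXfin, MarkedSpace.limsup_aux hXfin⟩
end

section
/- Let G be a finitely generated group with generating family X, and σ(n) = |B_X(n+1)| − |B_X(n)|. Then for every x ∈ 𝒫(G) and every integer n ≥ 0, the minimal number of closed balls of radius 2^{−n−1} needed to cover the closed ball B(x, 2^{−n}) in (𝒫(G), d_𝒫) equals 2^{σ(n)}; that is, N(B(x,2^{−n}), 2^{−n−1}) = 2^{σ(n)}. -/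
open Filter Set
open scoped ENNReal NNReal

open MarkedSpace

open scoped Pointwise

namespace MarkedSpace

lemma agree_mono_s14 {E : Type*} {ball : ℕ → Set E} (hb : Monotone ball) {A B : Set E} {m n : ℕ}
    (hmn : m ≤ n) (h : A ∩ ball n = B ∩ ball n) : A ∩ ball m = B ∩ ball m := by
  have h1 : ball m ⊆ ball n := hb hmn
  calc A ∩ ball m = (A ∩ ball n) ∩ ball m := by
        rw [Set.inter_assoc, Set.inter_eq_self_of_subset_right h1]
    _ = (B ∩ ball n) ∩ ball m := by rw [h]
    _ = B ∩ ball m := by rw [Set.inter_assoc, Set.inter_eq_self_of_subset_right h1]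

lemma nuB_le_of_not_agree {E : Type*} {ball : ℕ → Set E} (hb : Monotone ball) {A B : Set E} {k : ℕ}
    (h : ¬ A ∩ ball (k + 1) = B ∩ ball (k + 1)) : nuB ball A B ≤ (k : ℕ∞) := by
  refine iSup₂_le fun m hm => ?_
  rcases le_or_gt m k with h' | h'
  · exact_mod_cast h'
  · exact absurd (agree_mono_s14 hb h' hm) h

lemma le_nuB_of_agree {E : Type*} {ball : ℕ → Set E} {A B : Set E} {n : ℕ}
    (h : A ∩ ball n = B ∩ ball n) : (n : ℕ∞) ≤ nuB ball A B :=
  le_iSup₂ (f := fun m (_ : A ∩ ball m = B ∩ ball m) => (m : ℕ∞)) n h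

lemma distB_le_iff {E : Type*} {ball : ℕ → Set E} (hb : Monotone ball) (A B : Set E) (n : ℕ) :
    distB ball A B ≤ (2⁻¹ : ℝ) ^ n ↔ A ∩ ball n = B ∩ ball n := by
  classical
  rw [distB]
  split_ifs with h0 htop
  · constructor
    · intro _
      by_contra hn
      cases n with
      | zero => exact hn h0
      | succ k =>
        have h1 := nuB_le_of_not_agree hb hn
        rw [htop] at h1
        exact absurd h1 (by simp)
    · intro _; positivity
  · constructor
    · intro hle
      by_contra hn
      cases n with
      | zero => exact hn h0
      | succ k =>
        have hk := nuB_le_of_not_agree hb hn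
        have h1 : (nuB ball A B).toNat ≤ k := by
          have := ENat.toNat_le_toNat hk (by simp)
          simpa using this
        have h2 : (2⁻¹ : ℝ) ^ (k + 1) < (2⁻¹ : ℝ) ^ (nuB ball A B).toNat := by
          calc (2⁻¹ : ℝ) ^ (k + 1) < (2⁻¹ : ℝ) ^ k :=
                pow_lt_pow_right_of_lt_one₀ (by norm_num) (by norm_num) (Nat.lt_succ_self k)
            _ ≤ (2⁻¹ : ℝ) ^ (nuB ball A B).toNat := by
                rcases lt_or_eq_of_le h1 with h | h
                · exact le_of_lt (pow_lt_pow_right_of_lt_one₀ (by norm_num) (by norm_num) h)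
                · rw [h]
        linarith
    · intro hagree
      have h1 : (n : ℕ∞) ≤ nuB ball A B := le_nuB_of_agree hagree
      have h2 : n ≤ (nuB ball A B).toNat := by
        have := ENat.toNat_le_toNat h1 htop
        simpa using this
      rcases lt_or_eq_of_le h2 with h | h
      · exact le_of_lt (pow_lt_pow_right_of_lt_one₀ (by norm_num) (by norm_num) h)
      · rw [h]
  · constructor
    · intro hle
      exfalso
      have : (2⁻¹ : ℝ) ^ n ≤ 1 := pow_le_one₀ (by norm_num) (by norm_num)
      linarith
    · intro hn; exact absurd (agree_mono_s14 hb (Nat.zero_le n) hn) h0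

lemma wordBall_mono_s14 {G : Type*} [Group G] (X : Set G) : Monotone (wordBall X) :=
  fun _ _ h _ ⟨l, hl, hx, hp⟩ => ⟨l, hl.trans h, hx, hp⟩

lemma wordBall_finite_s14 {G : Type*} [Group G] {X : Set G} (hX : X.Finite) (n : ℕ) :
    (wordBall X n).Finite := by
  induction n with
  | zero =>
    apply Set.Finite.subset (Set.finite_singleton (1 : G))
    rintro g ⟨l, hl, -, hp⟩
    have hnil : l = [] := List.length_eq_zero_iff.mp (Nat.le_zero.mp hl)
    simp [hnil] at hp
    simp [← hp]
  | succ n ih =>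
    have hsub : wordBall X (n + 1) ⊆ (X ∪ X⁻¹ ∪ {1}) * wordBall X n := by
      rintro g ⟨l, hl, hx, hp⟩
      cases l with
      | nil =>
        refine ⟨1, by simp, 1, ⟨[], by simp⟩, by simpa using hp⟩
      | cons a l' =>
        refine ⟨a, ?_, l'.prod, ⟨l', by simpa using Nat.succ_le_succ_iff.mp hl,
          fun x hx' => hx x (List.mem_cons_of_mem a hx'), rfl⟩, by simpa using hp⟩
        rcases hx a List.mem_cons_self with h | h
        · exact Or.inl (Or.inl h)
        · exact Or.inl (Or.inr (Set.mem_inv.mpr h))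
    exact Set.Finite.subset
      (Set.Finite.mul ((hX.union hX.inv).union (Set.finite_singleton 1)) ih) hsub

end MarkedSpace


/-- For a finitely generated group `G` with generating family `X` and
`σ(n) = |B_X(n+1)| − |B_X(n)|` : for every `x ∈ 𝒫(G)` and `n ≥ 0`, the minimal number
of closed balls of radius `2^{−n−1}` needed to cover the closed ball `B(x, 2^{−n})`
of `(𝒫(G), d_𝒫)` equals `2^{σ(n)}`. -/
theorem coverNum_ball_powerset {G : Type*} [Group G] (X : Set G) (hXfin : X.Finite)
    (hXgen : Subgroup.closure X = ⊤) (x : Set G) (n : ℕ) :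
    coverNum (distB (wordBall X))
        {y : Set G | distB (wordBall X) x y ≤ (2⁻¹ : ℝ) ^ n} ((2⁻¹ : ℝ) ^ (n + 1)) =
      2 ^ ((wordBall X (n + 1)).ncard - (wordBall X n).ncard) := by
  classical
  have hmono := wordBall_mono_s14 X
  set Bn : Set G := wordBall X n with hBn
  set Bn1 : Set G := wordBall X (n + 1) with hBn1
  have hsub : Bn ⊆ Bn1 := hmono (Nat.le_succ n)
  have hfin1 : Bn1.Finite := wordBall_finite_s14 hXfin (n + 1)
  have hDfin : (Bn1 \ Bn).Finite := hfin1.diff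
  have hdisj : Disjoint (Bn1 \ Bn) Bn := disjoint_sdiff_left
  have hcard : (Bn1 \ Bn).ncard = Bn1.ncard - Bn.ncard :=
    Set.ncard_diff hsub (hfin1.subset hsub)
  have hSmem : ∀ y : Set G, distB (wordBall X) x y ≤ (2⁻¹ : ℝ) ^ n ↔ x ∩ Bn = y ∩ Bn :=
    fun y => distB_le_iff hmono x y n
  have hdmem : ∀ y z : Set G,
      distB (wordBall X) y z ≤ (2⁻¹ : ℝ) ^ (n + 1) ↔ y ∩ Bn1 = z ∩ Bn1 :=
    fun y z => distB_le_iff hmono y z (n + 1)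
  set c : Finset G → Set G := fun u => (x ∩ Bn) ∪ ↑u with hc
  set T : Finset (Set G) := hDfin.toFinset.powerset.image c with hT
  have hxBnD : (x ∩ Bn) ∩ (Bn1 \ Bn) = ∅ :=
    (disjoint_sdiff_right.mono_left Set.inter_subset_right).inter_eq
  have hcBn : ∀ u : Finset G, (↑u : Set G) ⊆ Bn1 \ Bn → c u ∩ Bn = x ∩ Bn := by
    intro u hu
    have h1 : (↑u : Set G) ∩ Bn = ∅ := (hdisj.mono_left hu).inter_eq
    simp only [hc, Set.union_inter_distrib_right, Set.inter_assoc, Set.inter_self, h1,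
      Set.union_empty]
  have hcD : ∀ u : Finset G, (↑u : Set G) ⊆ Bn1 \ Bn → c u ∩ (Bn1 \ Bn) = ↑u := by
    intro u hu
    simp only [hc, Set.union_inter_distrib_right, hxBnD, Set.empty_union]
    exact Set.inter_eq_self_of_subset_left hu
  have hcov : ∀ z : Set G, x ∩ Bn = z ∩ Bn →
      ((x ∩ Bn) ∪ (z ∩ (Bn1 \ Bn))) ∩ Bn1 = z ∩ Bn1 := by
    intro z hz
    have h1 : (x ∩ Bn) ∪ (z ∩ (Bn1 \ Bn)) ⊆ Bn1 :=
      Set.union_subset (Set.inter_subset_right.trans hsub)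
        (Set.inter_subset_right.trans Set.diff_subset)
    rw [Set.inter_eq_self_of_subset_left h1, hz, ← Set.inter_union_distrib_left,
      Set.union_diff_cancel hsub]
  have hmemPow : ∀ u : Finset G, u ∈ hDfin.toFinset.powerset → (↑u : Set G) ⊆ Bn1 \ Bn :=
    fun u hu a ha => hDfin.mem_toFinset.mp (Finset.mem_powerset.mp hu ha)
  have hTcard : T.card = 2 ^ (Bn1.ncard - Bn.ncard) := by
    have hinj : Set.InjOn c ↑hDfin.toFinset.powerset := by
      intro u hu v hv huv
      have hu' := hmemPow u (Finset.mem_coe.mp hu)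
      have hv' := hmemPow v (Finset.mem_coe.mp hv)
      have : (↑u : Set G) = ↑v := by rw [← hcD u hu', ← hcD v hv', huv]
      exact Finset.coe_injective this
    rw [hT, Finset.card_image_of_injOn hinj, Finset.card_powerset,
      ← Set.ncard_eq_toFinset_card _ hDfin, hcard]
  have hTsub : ↑T ⊆ {y : Set G | distB (wordBall X) x y ≤ (2⁻¹ : ℝ) ^ n} := by
    intro y hy
    rw [hT, Finset.coe_image] at hy
    obtain ⟨u, hu, rfl⟩ := hy
    exact (hSmem _).mpr (hcBn u (hmemPow u (Finset.mem_coe.mp hu))).symm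
  have hTcov : {y : Set G | distB (wordBall X) x y ≤ (2⁻¹ : ℝ) ^ n} ⊆
      ⋃ y ∈ T, {z : Set G | distB (wordBall X) y z ≤ (2⁻¹ : ℝ) ^ (n + 1)} := by
    intro z hz
    have hz' : x ∩ Bn = z ∩ Bn := (hSmem z).mp hz
    have hzD : (z ∩ (Bn1 \ Bn)).Finite := hDfin.subset Set.inter_subset_right
    have hmem : c hzD.toFinset ∈ T := by
      rw [hT]
      apply Finset.mem_image_of_mem
      rw [Finset.mem_powerset]
      intro a ha
      rw [Set.Finite.mem_toFinset] at ha ⊢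
      exact ha.2
    refine Set.mem_biUnion hmem ?_
    have heq : c hzD.toFinset = (x ∩ Bn) ∪ (z ∩ (Bn1 \ Bn)) := by
      simp only [hc, hzD.coe_toFinset]
    show distB (wordBall X) (c hzD.toFinset) z ≤ (2⁻¹ : ℝ) ^ (n + 1)
    rw [hdmem, heq]
    exact hcov z hz'
  have hmemN : 2 ^ (Bn1.ncard - Bn.ncard) ∈ {m : ℕ | ∃ t : Finset (Set G), t.card = m ∧
      ↑t ⊆ {y : Set G | distB (wordBall X) x y ≤ (2⁻¹ : ℝ) ^ n} ∧
      {y : Set G | distB (wordBall X) x y ≤ (2⁻¹ : ℝ) ^ n} ⊆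
        ⋃ y ∈ t, {z : Set G | distB (wordBall X) y z ≤ (2⁻¹ : ℝ) ^ (n + 1)}} :=
    ⟨T, hTcard, hTsub, hTcov⟩
  have hlb : ∀ m ∈ {m : ℕ | ∃ t : Finset (Set G), t.card = m ∧
      ↑t ⊆ {y : Set G | distB (wordBall X) x y ≤ (2⁻¹ : ℝ) ^ n} ∧
      {y : Set G | distB (wordBall X) x y ≤ (2⁻¹ : ℝ) ^ n} ⊆
        ⋃ y ∈ t, {z : Set G | distB (wordBall X) y z ≤ (2⁻¹ : ℝ) ^ (n + 1)}},
      2 ^ (Bn1.ncard - Bn.ncard) ≤ m := by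
    rintro m ⟨t, rfl, hts, htcov⟩
    have hsubim : T ⊆ t.image (fun y => (x ∩ Bn) ∪ (y ∩ (Bn1 \ Bn))) := by
      intro w hw
      rw [hT, Finset.mem_image] at hw
      obtain ⟨u, hu, rfl⟩ := hw
      have hu' := hmemPow u hu
      have hcu : c u ∈ {y : Set G | distB (wordBall X) x y ≤ (2⁻¹ : ℝ) ^ n} :=
        (hSmem _).mpr (hcBn u hu').symm
      obtain ⟨y, hy, hyd⟩ := Set.mem_iUnion₂.mp (htcov hcu)
      rw [Finset.mem_image]
      refine ⟨y, hy, ?_⟩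
      have h1 : y ∩ Bn1 = c u ∩ Bn1 := (hdmem y (c u)).mp hyd
      have h2 : y ∩ (Bn1 \ Bn) = ↑u := by
        calc y ∩ (Bn1 \ Bn) = (y ∩ Bn1) ∩ (Bn1 \ Bn) := by
              rw [Set.inter_assoc, Set.inter_eq_self_of_subset_right Set.diff_subset]
          _ = (c u ∩ Bn1) ∩ (Bn1 \ Bn) := by rw [h1]
          _ = c u ∩ (Bn1 \ Bn) := by
              rw [Set.inter_assoc, Set.inter_eq_self_of_subset_right Set.diff_subset]
          _ = ↑u := hcD u hu'
      rw [h2]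
    calc 2 ^ (Bn1.ncard - Bn.ncard) = T.card := hTcard.symm
      _ ≤ (t.image (fun y => (x ∩ Bn) ∪ (y ∩ (Bn1 \ Bn)))).card := Finset.card_le_card hsubim
      _ ≤ t.card := Finset.card_image_le
  rw [coverNum]
  exact le_antisymm (Nat.sInf_le hmemN) (le_csInf ⟨_, hmemN⟩ hlb)
end

section
/- Let m ≥ 2, k ≥ 1, λ ∈ (0,1/6] and n ≥ 1. If (r₁,…,r_k) and (r'₁,…,r'_k) belong to ps(n) and d_m(⟪r₁,…,r_k⟫, ⟪r'₁,…,r'_k⟫) ≤ 2^{−n}, then ⟪r₁,…,r_k⟫ = ⟪r'₁,…,r'_k⟫. In other words, distinct elements of PS(n) are pairwise at distance strictly greater than 2^{−n} in 𝒢_m. -/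
open Filter Set
open scoped ENNReal NNReal

namespace MarkedSpace

/-- `fball m n` : the ball `B_S(n)` of radius `n` in the free group `𝕃_m` on `m`
generators, with respect to the word length (length of the reduced word). -/
def fball (m : ℕ) (n : ℕ) : Set (FreeGroup (Fin m)) := {g | g.toWord.length ≤ n}

/-- The metric `d_m` of the space of marked groups on `m` generators
(on the set of subgroups of `𝕃_m`). -/
noncomputable def dMarked (m : ℕ) (N₁ N₂ : Subgroup (FreeGroup (Fin m))) : ℝ :=
  distB (fball m) (N₁ : Set (FreeGroup (Fin m))) (N₂ : Set (FreeGroup (Fin m)))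

/-- A reduced word is cyclically reduced if its first letter is not the inverse of its
last letter. -/
def CyclicallyReduced {m : ℕ} (g : FreeGroup (Fin m)) : Prop :=
  ∀ h : g.toWord ≠ [],
    (g.toWord.head h).1 ≠ (g.toWord.getLast h).1 ∨ (g.toWord.head h).2 = (g.toWord.getLast h).2

/-- `cyc m n` : cyclically reduced elements of `𝕃_m` of length `n`. -/
def cyc (m n : ℕ) : Set (FreeGroup (Fin m)) :=
  {g | g.toWord.length = n ∧ CyclicallyReduced g}

end MarkedSpace

namespace MarkedSpace

/-- The symmetrized set of a cyclically reduced word `u` : all cyclic conjugates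
(rotations of the reduced word) of `u` and of `u⁻¹`. -/
def symWords {m : ℕ} (u : FreeGroup (Fin m)) : Set (List (Fin m × Bool)) :=
  {w | ∃ k : ℕ, w = u.toWord.rotate k ∨ w = (u⁻¹).toWord.rotate k}

/-- The small cancellation condition `C'(lam)` for a set `R` of cyclically reduced
words: every piece `p` between two elements of `R` (a common subword of cyclic
conjugates, i.e. a common prefix of two distinct elements of the symmetrized set)
satisfies `|p| < lam * min_{r ∈ R} |r|`. -/
def SmallCancel {m : ℕ} (lam : ℝ) (R : Set (FreeGroup (Fin m))) : Prop :=
  ∀ u ∈ R, ∀ v ∈ R, ∀ w₁ ∈ symWords u, ∀ w₂ ∈ symWords v, w₁ ≠ w₂ →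
    ∀ p : List (Fin m × Bool), p <+: w₁ → p <+: w₂ →
      ∀ r ∈ R, (p.length : ℝ) < lam * (r.toWord.length : ℝ)

/-- `ps m k lam n` : the `k`-tuples of cyclically reduced words of length `n`
satisfying the small cancellation condition `C'(lam)`. -/
def ps (m k : ℕ) (lam : ℝ) (n : ℕ) : Set (Fin k → FreeGroup (Fin m)) :=
  {r | (∀ i, r i ∈ cyc m n) ∧ SmallCancel lam (Set.range r)}

/-- `PSn m k lam n` : normal closures of tuples in `ps m k lam n`. -/
def PSn (m k : ℕ) (lam : ℝ) (n : ℕ) : Set (Subgroup (FreeGroup (Fin m))) :=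
  {N | ∃ r ∈ ps m k lam n, N = Subgroup.normalClosure (Set.range r)}

/-- `PS = ⋃_{n ≥ 1} PS(n)`. -/
def PS (m k : ℕ) (lam : ℝ) : Set (Subgroup (FreeGroup (Fin m))) :=
  ⋃ n ∈ {n : ℕ | 1 ≤ n}, PSn m k lam n

end MarkedSpace

open MarkedSpace

lemma MarkedSpace.fball_mono {m : ℕ} {a b : ℕ} (h : a ≤ b) : fball m a ⊆ fball m b :=
  fun g hg => le_trans hg (by exact_mod_cast h)

lemma MarkedSpace.nuB_witness {E : Type*} {ball : ℕ → Set E} {A B : Set E} {n : ℕ}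
    (hn : 1 ≤ n) (h : (n : ℕ∞) ≤ nuB ball A B) :
    ∃ n' : ℕ, n ≤ n' ∧ A ∩ ball n' = B ∩ ball n' := by
  have h2 : ((n - 1 : ℕ) : ℕ∞) < nuB ball A B := by
    refine lt_of_lt_of_le ?_ h
    exact_mod_cast Nat.sub_lt hn one_pos
  rw [nuB, lt_iSup_iff] at h2
  obtain ⟨n', hn'⟩ := h2
  rw [lt_iSup_iff] at hn'
  obtain ⟨heq, hlt⟩ := hn'
  refine ⟨n', ?_, heq⟩
  have : (n - 1 : ℕ) < n' := by exact_mod_cast hlt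
  omega

/-- For `m ≥ 2`, `k ≥ 1`, `λ ∈ (0,1/6]` and `n ≥ 1`: if two tuples of `ps(n)` have
normal closures at distance at most `2^{−n}` in `𝒢_m`, then those normal closures
are equal — i.e. distinct elements of `PS(n)` are pairwise `2^{−n}`-distinguishable. -/
theorem psn_distinguishable (m k n : ℕ) (hm : 2 ≤ m) (hk : 1 ≤ k) (hn : 1 ≤ n)
    (lam : ℝ) (hlam : 0 < lam) (hlam' : lam ≤ 1 / 6)
    (r r' : Fin k → FreeGroup (Fin m)) (hr : r ∈ ps m k lam n) (hr' : r' ∈ ps m k lam n)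
    (hd : dMarked m (Subgroup.normalClosure (Set.range r))
        (Subgroup.normalClosure (Set.range r')) ≤ (2⁻¹ : ℝ) ^ n) :
    Subgroup.normalClosure (Set.range r) = Subgroup.normalClosure (Set.range r') := by
  set A : Set (FreeGroup (Fin m)) := ↑(Subgroup.normalClosure (Set.range r)) with hA
  set B : Set (FreeGroup (Fin m)) := ↑(Subgroup.normalClosure (Set.range r')) with hB
  -- step 1 : (n : ℕ∞) ≤ nuB
  have hnu : (n : ℕ∞) ≤ nuB (fball m) A B := by
    rw [dMarked, distB] at hd
    split_ifs at hd with h0 htop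
    · exact htop ▸ le_top
    · have := (pow_right_strictAnti₀ (a := (2⁻¹ : ℝ)) (by norm_num) (by norm_num)).le_iff_ge.mp hd
      calc (n : ℕ∞) ≤ ((nuB (fball m) A B).toNat : ℕ∞) := by exact_mod_cast this
        _ = nuB (fball m) A B := ENat.coe_toNat htop
    · exfalso
      have : (2⁻¹ : ℝ) ^ n ≤ 1 := pow_le_one₀ (by norm_num) (by norm_num)
      linarith
  -- step 2 : equality on ball n
  obtain ⟨n', hn', heq⟩ := MarkedSpace.nuB_witness hn hnu
  have hball : ∀ g ∈ fball m n, g ∈ A ↔ g ∈ B := by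
    intro g hg
    have hg' : g ∈ fball m n' := MarkedSpace.fball_mono hn' hg
    constructor
    · intro h
      exact ((Set.ext_iff.mp heq g).mp ⟨h, hg'⟩).1
    · intro h
      exact ((Set.ext_iff.mp heq g).mpr ⟨h, hg'⟩).1
  -- step 3 : generators lie in the ball, so each closure contains the other's generators
  have hmemA : ∀ i, r i ∈ B := fun i =>
    (hball _ (le_of_eq (hr.1 i).1)).mp
      (Subgroup.subset_normalClosure (Set.mem_range_self i))
  have hmemB : ∀ i, r' i ∈ A := fun i =>
    (hball _ (le_of_eq (hr'.1 i).1)).mpr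
      (Subgroup.subset_normalClosure (Set.mem_range_self i))
  exact le_antisymm
    (Subgroup.normalClosure_le_normal (Set.range_subset_iff.mpr hmemA))
    (Subgroup.normalClosure_le_normal (Set.range_subset_iff.mpr hmemB))
end
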